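/- For every positive integer n there exists a bijection Φ on the set of set partitions of type C_n such that for every type C_n set partition 𝓑: op(Φ(𝓑)) = op(𝓑), cl(Φ(𝓑)) = cl(𝓑), the number of crossings among pairs of arcs of Φ(𝓑) that both have positive opener equals the number of nestings among pairs of arcs of 𝓑 that both have positive opener, and vice versa (i.e., the corresponding restricted nesting number of Φ(𝓑) equals the restricted crossing number of 𝓑). -/

import Mathlib

open scoped Classical
noncomputable section

/-! ### Set partitions of type A -/

/-- A set partition of `[n] = {1,…,n}`: pairwise disjoint nonempty blocks covering `[n]`. -/
structure SetPartitionA (n : ℕ) where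
  blocks : Finset (Finset ℕ)
  nonempty : ∀ B ∈ blocks, B.Nonempty
  disj : ∀ B ∈ blocks, ∀ B' ∈ blocks, B ≠ B' → Disjoint B B'
  cover : ∀ i : ℕ, (∃ B ∈ blocks, i ∈ B) ↔ i ∈ Finset.Icc 1 n

/-- Two arcs `(i,j)`, `(i',j')` cross if `i<i'<j<j'` (in either order of the two arcs). -/
def ACross (a b : ℕ × ℕ) : Prop :=
  (a.1 < b.1 ∧ b.1 < a.2 ∧ a.2 < b.2) ∨ (b.1 < a.1 ∧ a.1 < b.2 ∧ b.2 < a.2)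

/-- Two arcs `(i,j)`, `(i',j')` nest if `i<i'<j'<j` (in either order of the two arcs). -/
def ANest (a b : ℕ × ℕ) : Prop :=
  (a.1 < b.1 ∧ b.1 < b.2 ∧ b.2 < a.2) ∨ (b.1 < a.1 ∧ a.1 < a.2 ∧ a.2 < b.2)

namespace SetPartitionA

variable {n : ℕ}

/-- Openers: elements of `[n]` that are not the maximum of their block. -/
def openers (P : SetPartitionA n) : Finset ℕ :=
  (Finset.Icc 1 n).filter fun i => ∃ B ∈ P.blocks, i ∈ B ∧ ∃ j ∈ B, i < j

/-- Closers: elements of `[n]` that are not the minimum of their block. -/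
def closers (P : SetPartitionA n) : Finset ℕ :=
  (Finset.Icc 1 n).filter fun i => ∃ B ∈ P.blocks, i ∈ B ∧ ∃ j ∈ B, j < i

/-- `(i,j)` is an arc: `i < j` are in the same block with no block element in between. -/
def IsArc (P : SetPartitionA n) (i j : ℕ) : Prop :=
  i < j ∧ ∃ B ∈ P.blocks, i ∈ B ∧ j ∈ B ∧ ∀ k ∈ B, ¬(i < k ∧ k < j)

/-- The finite set of arcs of `P`. -/
def arcs (P : SetPartitionA n) : Finset (ℕ × ℕ) :=
  ((Finset.Icc 1 n) ×ˢ (Finset.Icc 1 n)).filter fun p => P.IsArc p.1 p.2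

/-- The number of crossings: pairs of arcs `(i,j)`, `(i',j')` with `i<i'<j<j'`. -/
def crossings (P : SetPartitionA n) : ℕ :=
  ((P.arcs ×ˢ P.arcs).filter fun q =>
    q.1.1 < q.2.1 ∧ q.2.1 < q.1.2 ∧ q.1.2 < q.2.2).card

/-- The number of nestings: pairs of arcs `(i,j)`, `(i',j')` with `i<i'<j'<j`. -/
def nestings (P : SetPartitionA n) : ℕ :=
  ((P.arcs ×ˢ P.arcs).filter fun q =>
    q.1.1 < q.2.1 ∧ q.2.1 < q.2.2 ∧ q.2.2 < q.1.2).card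

/-- The cardinality of a maximal crossing: largest set of mutually crossing arcs. -/
def maxCrossing (P : SetPartitionA n) : ℕ :=
  (P.arcs.powerset.filter fun S => ∀ a ∈ S, ∀ b ∈ S, a ≠ b → ACross a b).sup Finset.card

/-- The cardinality of a maximal nesting: largest set of mutually nesting arcs. -/
def maxNesting (P : SetPartitionA n) : ℕ :=
  (P.arcs.powerset.filter fun S => ∀ a ∈ S, ∀ b ∈ S, a ≠ b → ANest a b).sup Finset.card

end SetPartitionA

/-! ### Set partitions of classical types B/C/D on `[±n]` -/

/-- Position of `i ∈ [±n]` in the type `C` nesting order `1<⋯<n<-n<⋯<-1`. -/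
def nestOrd (n : ℕ) (i : ℤ) : ℤ := if 0 < i then i else 2 * n + 1 + i

/-- Position of `i ∈ [±n]` in the crossing order `1<⋯<n<-1<⋯<-n`. -/
def crossOrd (n : ℕ) (i : ℤ) : ℤ := if 0 < i then i else (n : ℤ) - i

/-- Position of `i ∈ [±n] ∪ {0}` in the type `B` nesting order `1<⋯<n<0<-n<⋯<-1`. -/
def nestOrdB (n : ℕ) (i : ℤ) : ℤ :=
  if 0 < i then i else if i = 0 then (n : ℤ) + 1 else 2 * n + 2 + i

/-- The negative `-B` of a block. -/
def negSet (B : Finset ℤ) : Finset ℤ := B.image fun x => -x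

/-- A set partition of type `B_n`/`C_n`: a set partition of `[±n]` with `B ∈ 𝓑 ↔ -B ∈ 𝓑`
and at most one block `B₀` with `B₀ = -B₀`. -/
structure SetPartitionC (n : ℕ) where
  blocks : Finset (Finset ℤ)
  nonempty : ∀ B ∈ blocks, B.Nonempty
  disj : ∀ B ∈ blocks, ∀ B' ∈ blocks, B ≠ B' → Disjoint B B'
  cover : ∀ i : ℤ, (∃ B ∈ blocks, i ∈ B) ↔ (i ≠ 0 ∧ |i| ≤ (n : ℤ))
  symm : ∀ B ∈ blocks, negSet B ∈ blocks
  zeroBlock : ∀ B ∈ blocks, ∀ B' ∈ blocks, negSet B = B → negSet B' = B' → B = B'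

/-- Endpoints of an arc, ordered by the crossing order. -/
def cpr (n : ℕ) (p : ℤ × ℤ) : ℤ × ℤ :=
  (min (crossOrd n p.1) (crossOrd n p.2), max (crossOrd n p.1) (crossOrd n p.2))

/-- `p` crosses `q` with `p` coming first in the crossing order. -/
def CrossRel (n : ℕ) (p q : ℤ × ℤ) : Prop :=
  (cpr n p).1 < (cpr n q).1 ∧ (cpr n q).1 < (cpr n p).2 ∧ (cpr n p).2 < (cpr n q).2

/-- The two arcs `p`, `q` cross in the crossing diagram. -/
def Crosses (n : ℕ) (p q : ℤ × ℤ) : Prop := CrossRel n p q ∨ CrossRel n q p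

/-- `p` nests over `q` in the nesting diagram (arcs written in nesting order). -/
def NestRel (n : ℕ) (p q : ℤ × ℤ) : Prop :=
  nestOrd n p.1 < nestOrd n q.1 ∧ nestOrd n q.2 < nestOrd n p.2

/-- The two arcs `p`, `q` nest in the nesting diagram. -/
def Nests (n : ℕ) (p q : ℤ × ℤ) : Prop := NestRel n p q ∨ NestRel n q p

/-- `p` nests over `q` in the type `B` nesting diagram. -/
def NestRelB (n : ℕ) (p q : ℤ × ℤ) : Prop :=
  nestOrdB n p.1 < nestOrdB n q.1 ∧ nestOrdB n q.2 < nestOrdB n p.2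

/-- The two arcs `p`, `q` nest in the type `B` nesting diagram. -/
def NestsB (n : ℕ) (p q : ℤ × ℤ) : Prop := NestRelB n p q ∨ NestRelB n q p

/-- Exceptional pairs for type `B` crossings: both arcs have positive opener and negative
closer, and at least one closer is smaller in absolute value than its opener. -/
def ExcCross (p q : ℤ × ℤ) : Prop :=
  0 < p.1 ∧ p.2 < 0 ∧ 0 < q.1 ∧ q.2 < 0 ∧ (|p.2| < |p.1| ∨ |q.2| < |q.1|)

/-- Exceptional pairs for type `B` nestings: both arcs have positive opener (or begin at `0`)
and negative closer (or end at `0`), and at least one closer is smaller in absolute value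
than its opener. -/
def ExcNest (p q : ℤ × ℤ) : Prop :=
  0 ≤ p.1 ∧ p.2 ≤ 0 ∧ 0 ≤ q.1 ∧ q.2 ≤ 0 ∧ (|p.2| < |p.1| ∨ |q.2| < |q.1|)

/-- A block augmented by `0` if it is the zero block. -/
def augB (B : Finset ℤ) : Finset ℤ := if negSet B = B then insert 0 B else B

/-- The arc `p` contains `n`. -/
def ContainsN (n : ℕ) (p : ℤ × ℤ) : Prop := p.1 = (n : ℤ) ∨ p.2 = (n : ℤ)

/-- The arc `p` contains `-n`. -/
def ContainsNegN (n : ℕ) (p : ℤ × ℤ) : Prop := p.1 = -(n : ℤ) ∨ p.2 = -(n : ℤ)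

namespace SetPartitionC

variable {n : ℕ}

/-- The ground set `[±n]` as a finset of integers. -/
def pmn (n : ℕ) : Finset ℤ := (Finset.Icc (-(n : ℤ)) (n : ℤ)).erase 0

/-- `(i,j)` is an arc: `i`, `j` are consecutive elements of a block in the nesting order. -/
def IsArc (P : SetPartitionC n) (i j : ℤ) : Prop :=
  nestOrd n i < nestOrd n j ∧ ∃ B ∈ P.blocks, i ∈ B ∧ j ∈ B ∧
    ∀ k ∈ B, ¬(nestOrd n i < nestOrd n k ∧ nestOrd n k < nestOrd n j)

/-- The finite set of arcs of `P` (written in nesting order). -/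
def arcs (P : SetPartitionC n) : Finset (ℤ × ℤ) :=
  (pmn n ×ˢ pmn n).filter fun p => P.IsArc p.1 p.2

/-- Openers: positive elements that are not maximal in their block w.r.t. the nesting order. -/
def openers (P : SetPartitionC n) : Finset ℤ :=
  (Finset.Icc 1 (n : ℤ)).filter fun i =>
    ∃ B ∈ P.blocks, i ∈ B ∧ ∃ j ∈ B, nestOrd n i < nestOrd n j

/-- Closers: positive elements that are not minimal in their block w.r.t. the nesting order. -/
def closers (P : SetPartitionC n) : Finset ℤ :=
  (Finset.Icc 1 (n : ℤ)).filter fun i =>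
    ∃ B ∈ P.blocks, i ∈ B ∧ ∃ j ∈ B, nestOrd n j < nestOrd n i

/-- The number of crossings of a type `C` set partition. -/
def crossings (P : SetPartitionC n) : ℕ :=
  ((P.arcs ×ˢ P.arcs).filter fun q => CrossRel n q.1 q.2).card

/-- The number of nestings of a type `C` set partition. -/
def nestings (P : SetPartitionC n) : ℕ :=
  ((P.arcs ×ˢ P.arcs).filter fun q => NestRel n q.1 q.2).card

/-- The number of crossings among pairs of arcs that both have positive opener. -/
def crossingsPos (P : SetPartitionC n) : ℕ :=
  (((P.arcs.filter fun p => 0 < p.1) ×ˢ (P.arcs.filter fun p => 0 < p.1)).filter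
    fun q => CrossRel n q.1 q.2).card

/-- The number of nestings among pairs of arcs that both have positive opener. -/
def nestingsPos (P : SetPartitionC n) : ℕ :=
  (((P.arcs.filter fun p => 0 < p.1) ×ˢ (P.arcs.filter fun p => 0 < p.1)).filter
    fun q => NestRel n q.1 q.2).card

/-- The cardinality of a maximal crossing. -/
def maxCrossing (P : SetPartitionC n) : ℕ :=
  (P.arcs.powerset.filter fun S => ∀ a ∈ S, ∀ b ∈ S, a ≠ b → Crosses n a b).sup Finset.card

/-- The cardinality of a maximal nesting. -/
def maxNesting (P : SetPartitionC n) : ℕ :=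
  (P.arcs.powerset.filter fun S => ∀ a ∈ S, ∀ b ∈ S, a ≠ b → Nests n a b).sup Finset.card

/-! ### Type B notions -/

/-- `(i,j)` is a type `B` nesting arc: consecutive elements of an augmented block in the
type `B` nesting order. -/
def IsArcB (P : SetPartitionC n) (i j : ℤ) : Prop :=
  nestOrdB n i < nestOrdB n j ∧ ∃ B ∈ P.blocks, i ∈ augB B ∧ j ∈ augB B ∧
    ∀ k ∈ augB B, ¬(nestOrdB n i < nestOrdB n k ∧ nestOrdB n k < nestOrdB n j)

/-- The finite set of type `B` nesting arcs of `P`. -/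
def arcsB (P : SetPartitionC n) : Finset (ℤ × ℤ) :=
  ((insert 0 (pmn n)) ×ˢ (insert 0 (pmn n))).filter fun p => P.IsArcB p.1 p.2

/-- The number of type `B` crossings. -/
def crossingsB (P : SetPartitionC n) : ℕ :=
  ((P.arcs ×ˢ P.arcs).filter fun q => CrossRel n q.1 q.2 ∧ ¬ExcCross q.1 q.2).card

/-- The number of type `B` nestings. -/
def nestingsB (P : SetPartitionC n) : ℕ :=
  ((P.arcsB ×ˢ P.arcsB).filter fun q => NestRelB n q.1 q.2 ∧ ¬ExcNest q.1 q.2).card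

/-- Openers in type `B`: positive elements not maximal in their block
w.r.t. the type `B` nesting order. -/
def openersB (P : SetPartitionC n) : Finset ℤ :=
  (Finset.Icc 1 (n : ℤ)).filter fun i =>
    ∃ B ∈ P.blocks, i ∈ B ∧ ∃ j ∈ B, nestOrdB n i < nestOrdB n j

/-- Closers in type `B`: positive elements not minimal in their block
w.r.t. the type `B` nesting order. -/
def closersB (P : SetPartitionC n) : Finset ℤ :=
  (Finset.Icc 1 (n : ℤ)).filter fun i =>
    ∃ B ∈ P.blocks, i ∈ B ∧ ∃ j ∈ B, nestOrdB n j < nestOrdB n i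

/-- The cardinality of a maximal type `B` crossing. -/
def maxCrossingB (P : SetPartitionC n) : ℕ :=
  (P.arcs.powerset.filter fun S =>
    ∀ a ∈ S, ∀ b ∈ S, a ≠ b → Crosses n a b ∧ ¬ExcCross a b).sup Finset.card

/-- The cardinality of a maximal type `B` nesting. -/
def maxNestingB (P : SetPartitionC n) : ℕ :=
  (P.arcsB.powerset.filter fun S =>
    ∀ a ∈ S, ∀ b ∈ S, a ≠ b → NestsB n a b ∧ ¬ExcNest a b).sup Finset.card

/-! ### Type D notions -/

/-- A type `C` set partition is of type `D` if the zero block, when present, is not a single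
pair `{i,-i}`. -/
def IsTypeD (P : SetPartitionC n) : Prop :=
  ∀ B ∈ P.blocks, negSet B = B → B.card ≠ 2

/-- The arcs starting in `{1,…,n-1}` and ending in the negative of an element of `{1,…,n-1}`. -/
def pnArcs (P : SetPartitionC n) : Finset (ℤ × ℤ) :=
  P.arcs.filter fun p => 0 < p.1 ∧ p.1 < (n : ℤ) ∧ -(n : ℤ) < p.2 ∧ p.2 < 0

/-- The index `l` of an arc `a = (i_l, -j_l)` in the list of `pnArcs` ordered by openers. -/
def dRank (P : SetPartitionC n) (a : ℤ × ℤ) : ℕ :=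
  (P.pnArcs.filter fun b => b.1 ≤ a.1).card

/-- The crossings allowed in a non-crossing set partition of type `D`. -/
def AllowedCrossD (P : SetPartitionC n) (p q : ℤ × ℤ) : Prop :=
  (ContainsN n p ∧ q ∈ P.pnArcs ∧ P.pnArcs.card < 2 * P.dRank q) ∨
  (ContainsN n q ∧ p ∈ P.pnArcs ∧ P.pnArcs.card < 2 * P.dRank p) ∨
  (ContainsNegN n p ∧ q ∈ P.pnArcs ∧ 2 * P.dRank q ≤ P.pnArcs.card) ∨
  (ContainsNegN n q ∧ p ∈ P.pnArcs ∧ 2 * P.dRank p ≤ P.pnArcs.card) ∨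
  (ContainsN n p ∧ ContainsNegN n q) ∨
  (ContainsN n q ∧ ContainsNegN n p)

/-- `P` is a non-crossing set partition of type `D_n`. -/
def NonCrossingD (P : SetPartitionC n) : Prop :=
  (∀ i : ℤ, 0 < i → P.IsArc i (-i) → i = n) ∧
  (∀ p ∈ P.arcs, ∀ q ∈ P.arcs, Crosses n p q → P.AllowedCrossD p q) ∧
  (∀ p ∈ P.arcs, ContainsN n p →
    ∀ q ∈ P.pnArcs, P.pnArcs.card < 2 * P.dRank q → Crosses n p q) ∧
  (∀ p ∈ P.arcs, ContainsNegN n p →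
    ∀ q ∈ P.pnArcs, 2 * P.dRank q ≤ P.pnArcs.card → Crosses n p q)

/-- The nestings (`p` over `q`) allowed in a non-nesting set partition of type `D`. -/
def AllowedNestD (P : SetPartitionC n) (p q : ℤ × ℤ) : Prop :=
  (0 < p.1 ∧ p.1 < q.1 ∧ q.1 < (n : ℤ) ∧ p.2 = -(n : ℤ) ∧ q.2 = (n : ℤ)) ∨
  (q.1 = (n : ℤ) ∧ q.2 = -(n : ℤ) ∧ 0 < p.1 ∧ p.1 < (n : ℤ) ∧ -(n : ℤ) < p.2 ∧ p.2 < 0 ∧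
    ∃ m : ℤ, 0 < m ∧ m < p.1 ∧ m < -p.2 ∧ P.IsArc m (n : ℤ))

/-- `P` is a non-nesting set partition of type `D_n`. -/
def NonNestingD (P : SetPartitionC n) : Prop :=
  (∀ i : ℤ, 0 < i → P.IsArc i (-i) → i = n) ∧
  (∀ p ∈ P.arcs, ∀ q ∈ P.arcs, NestRel n p q → P.AllowedNestD p q)

end SetPartitionC

/-! ### The staircase polyomino and chains in fillings -/

/-- The cells of the staircase polyomino `P_n`: `(c,r)` with `1 ≤ c ≤ n`, `c ≤ r ≤ 2n-1`. -/
def cellsP (n : ℕ) : Finset (ℕ × ℕ) :=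
  ((Finset.Icc 1 n) ×ˢ (Finset.Icc 1 (2 * n - 1))).filter fun p => p.1 ≤ p.2

/-- The length of the longest north-east chain among a set of (nonzero) cells:
columns strictly increase while rows strictly decrease. -/
def neLen (S : Finset (ℕ × ℕ)) : ℕ :=
  (S.powerset.filter fun T =>
    ∀ a ∈ T, ∀ b ∈ T, a ≠ b →
      (a.1 < b.1 ∧ b.2 < a.2) ∨ (b.1 < a.1 ∧ a.2 < b.2)).sup Finset.card

/-- The length of the longest south-east chain among a set of (nonzero) cells:
columns and rows strictly increase, and the surrounding rectangle lies in the polyomino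
(`a.1 ≤ b.2` for all cells `a`, `b` of the chain). -/
def seLen (S : Finset (ℕ × ℕ)) : ℕ :=
  (S.powerset.filter fun T =>
    (∀ a ∈ T, ∀ b ∈ T, a ≠ b →
      (a.1 < b.1 ∧ a.2 < b.2) ∨ (b.1 < a.1 ∧ b.2 < a.2)) ∧
    ∀ a ∈ T, ∀ b ∈ T, a.1 ≤ b.2).sup Finset.card

namespace SetPartitionC

variable {n : ℕ}

/-- The cells filled with `1` in the nesting filling of the staircase polyomino: rows are
labelled from top to bottom by `2,…,n,-n,…,-1`; the cell in column `i` and row labelled `j`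
is filled iff `(i,j)` is an arc with positive opener `i`. -/
def nestFill (P : SetPartitionC n) : Finset (ℕ × ℕ) :=
  (cellsP n).filter fun c => ∃ j : ℤ, P.IsArc (c.1 : ℤ) j ∧ nestOrd n j = (c.2 : ℤ) + 1

/-- The cells filled with `1` in the crossing filling of the staircase polyomino: rows are
labelled from top to bottom by `2,…,n,-1,…,-n`; the cell in column `i` and row labelled `j`
is filled iff `(i,j)` is an arc with positive opener `i`. -/
def crossFill (P : SetPartitionC n) : Finset (ℕ × ℕ) :=
  (cellsP n).filter fun c => ∃ j : ℤ, P.IsArc (c.1 : ℤ) j ∧ crossOrd n j = (c.2 : ℤ) + 1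

end SetPartitionC

/-! ### Triangulations of the symmetric 2n-gon and symmetric fans of Dyck paths -/

/-- `p` is a diagonal of the `2n`-gon with vertices labelled by `[±n]`, written with its two
(distinct) endpoints in crossing order. -/
def IsDiag (n : ℕ) (p : ℤ × ℤ) : Prop :=
  p.1 ≠ 0 ∧ p.2 ≠ 0 ∧ |p.1| ≤ (n : ℤ) ∧ |p.2| ≤ (n : ℤ) ∧ crossOrd n p.1 < crossOrd n p.2

/-- Normalize a pair so that its endpoints are in crossing order. -/
def normD (n : ℕ) (p : ℤ × ℤ) : ℤ × ℤ :=
  if crossOrd n p.1 < crossOrd n p.2 then p else (p.2, p.1)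

/-- `ω` contains `m` mutually crossing diagonals. -/
def HasMCross (n m : ℕ) (ω : Finset (ℤ × ℤ)) : Prop :=
  ∃ S ⊆ ω, S.card = m ∧ ∀ a ∈ S, ∀ b ∈ S, a ≠ b → Crosses n a b

/-- A type `C_n` `k`-triangulation: a symmetric set of diagonals with no `(k+1)`-crossing,
maximal with this property. -/
def IsTriangC (n k : ℕ) (ω : Finset (ℤ × ℤ)) : Prop :=
  (∀ p ∈ ω, IsDiag n p) ∧
  (∀ p ∈ ω, normD n (-p.1, -p.2) ∈ ω) ∧
  ¬HasMCross n (k + 1) ω ∧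
  ∀ d : ℤ × ℤ, IsDiag n d → d ∉ ω → HasMCross n (k + 1) (insert d ω)

/-- A Dyck path in the staircase polyomino starting at the top cell `(i,i)` of column `i`,
proceeding by unit south or west steps inside `P_n`, and ending on the main diagonal
`r = 2n - c`. -/
def IsDyckPath (n i : ℕ) (l : List (ℕ × ℕ)) : Prop :=
  l ≠ [] ∧ l.head? = some (i, i) ∧ (∀ c ∈ l, c ∈ cellsP n) ∧
  l.Chain' (fun a b => (b.1 = a.1 ∧ b.2 = a.2 + 1) ∨ (b.1 + 1 = a.1 ∧ b.2 = a.2)) ∧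
  ∀ c : ℕ × ℕ, l.getLast? = some c → c.2 = 2 * n - c.1

/-- A symmetric fan of `k` non-intersecting Dyck paths: the `i`-th path starts at cell
`(i,i)` and the paths are pairwise cell-disjoint. -/
def IsSymFan (n k : ℕ) (f : Fin k → List (ℕ × ℕ)) : Prop :=
  (∀ i : Fin k, IsDyckPath n ((i : ℕ) + 1) (f i)) ∧
  ∀ i j : Fin k, i ≠ j → ∀ c ∈ f i, c ∉ f j

/-!
A type `C_n` set partition is determined by its arcs `(i, j)` with positive opener `i`: those
with `0 < j` form a matching on `[n]`, the others cross the middle and come in mirror pairs.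
Two arcs crossing the middle cross exactly when they nest. An arc `(k, l)` crosses, resp. nests
over, an arc `(i, j)` with `0 < j` exactly when `k` is still open at `j` and lies inside `(i, j)`,
resp. left of `i`; an arc crossing the middle never closes before `j`. Hence the Kasraoui–Zeng
involution of the matching, in which the openers of arcs crossing the middle stay open forever,
exchanges all remaining crossings and nestings while fixing openers and closers. The arcs
crossing the middle are then moved onto the openers it leaves free by an order-preserving
relabelling at both ends, which keeps the crossings among them.
-/

open Finset

section RankTransport

variable {α : Type*} [LinearOrder α] {S T : Finset α} {a b o : α} {m : ℕ}

def rankIn (S : Finset α) (o : α) : ℕ := #(S.filter (· < o))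

lemma rankIn_lt_card (ho : o ∈ S) : rankIn S o < #S :=
  card_lt_card <| filter_ssubset.2 ⟨o, ho, lt_irrefl o⟩

lemma rankIn_add_card_filter_gt (ho : o ∈ S) : rankIn S o + #(S.filter (o < ·)) = #S - 1 := by
  rw [rankIn, ← card_union_of_disjoint (disjoint_filter.2 fun x _ h h' => lt_asymm h h'),
    ← card_erase_of_mem ho]
  congr 1
  ext x
  simp only [mem_union, mem_filter, mem_erase]
  grind

lemma filter_lt_subset_filter_lt (hab : a ≤ b) : S.filter (· < a) ⊆ S.filter (· < b) :=
  fun _ hx => mem_filter.2 ⟨(mem_filter.1 hx).1, (mem_filter.1 hx).2.trans_le hab⟩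

lemma rankIn_mono : Monotone (rankIn S) := fun _ _ hab =>
  card_le_card (filter_lt_subset_filter_lt hab)

lemma rankIn_lt_rankIn (ha : a ∈ S) (hab : a < b) : rankIn S a < rankIn S b :=
  card_lt_card <| ssubset_iff_of_subset (filter_lt_subset_filter_lt hab.le) |>.2
    ⟨a, mem_filter.2 ⟨ha, hab⟩, fun h => lt_irrefl a (mem_filter.1 h).2⟩

lemma rankIn_injOn : Set.InjOn (rankIn S) S :=
  StrictMonoOn.injOn fun _ ha _ _ hab => rankIn_lt_rankIn ha hab

lemma exists_rankIn_eq (hm : m < #S) : ∃ o ∈ S, rankIn S o = m := by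
  obtain ⟨o, ho, h⟩ := surj_on_of_inj_on_of_card_le (s := S) (t := range #S)
    (fun o _ => rankIn S o) (fun _ ho => mem_range.2 (rankIn_lt_card ho))
    (fun _ _ ha hb h => rankIn_injOn ha hb h) (by simp) m (mem_range.2 hm)
  exact ⟨o, ho, h.symm⟩

variable [Inhabited α]

def unrankIn (S : Finset α) (m : ℕ) : α :=
  if h : m < #S then (exists_rankIn_eq h).choose else default

lemma unrankIn_mem (hm : m < #S) : unrankIn S m ∈ S := by
  rw [unrankIn, dif_pos hm]; exact (exists_rankIn_eq hm).choose_spec.1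

lemma rankIn_unrankIn (hm : m < #S) : rankIn S (unrankIn S m) = m := by
  rw [unrankIn, dif_pos hm]; exact (exists_rankIn_eq hm).choose_spec.2

def rankTransport (S T : Finset α) (o : α) : α := unrankIn T (rankIn S o)

def rankMirror (S T : Finset α) (o : α) : α := unrankIn T (#T - 1 - rankIn S o)

variable (hST : #S = #T)
include hST

lemma rankTransport_mem (ho : o ∈ S) : rankTransport S T o ∈ T :=
  unrankIn_mem (hST ▸ rankIn_lt_card ho)

lemma rankIn_rankTransport (ho : o ∈ S) : rankIn T (rankTransport S T o) = rankIn S o :=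
  rankIn_unrankIn (hST ▸ rankIn_lt_card ho)

lemma rankTransport_rankTransport (ho : o ∈ S) :
    rankTransport T S (rankTransport S T o) = o :=
  rankIn_injOn (rankTransport_mem hST.symm (rankTransport_mem hST ho)) ho <| by
    rw [rankIn_rankTransport hST.symm (rankTransport_mem hST ho), rankIn_rankTransport hST ho]

lemma rankTransport_strictMonoOn : StrictMonoOn (rankTransport S T) S := fun _ ha _ hb hab =>
  lt_of_not_ge fun h => (rankIn_mono h).not_gt <| by
    rw [rankIn_rankTransport hST ha, rankIn_rankTransport hST hb]
    exact rankIn_lt_rankIn ha hab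

lemma rankMirror_mem (ho : o ∈ S) : rankMirror S T o ∈ T :=
  unrankIn_mem (by have := rankIn_lt_card ho; omega)

lemma rankIn_rankMirror (ho : o ∈ S) :
    rankIn T (rankMirror S T o) = #(S.filter (o < ·)) := by
  have h1 := rankIn_lt_card ho
  have h2 := rankIn_add_card_filter_gt ho
  rw [rankMirror, rankIn_unrankIn (by omega)]
  omega

lemma card_filter_gt_rankMirror (ho : o ∈ S) :
    #(T.filter (rankMirror S T o < ·)) = rankIn S o := by
  have h1 := rankIn_add_card_filter_gt (rankMirror_mem hST ho)
  have h2 := rankIn_add_card_filter_gt ho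
  rw [rankIn_rankMirror hST ho] at h1
  omega

lemma rankMirror_rankMirror (ho : o ∈ S) : rankMirror T S (rankMirror S T o) = o :=
  rankIn_injOn (rankMirror_mem hST.symm (rankMirror_mem hST ho)) ho <| by
    have h1 := rankIn_add_card_filter_gt ho
    have h2 := rankIn_lt_card ho
    rw [rankIn_rankMirror hST.symm (rankMirror_mem hST ho),
      card_filter_gt_rankMirror hST ho]

end RankTransport

section RelationChains

open Relation

variable {α : Type*} {r : α → α → Prop} {a b : α}

theorem EqvGen.reflTransGen_total (hr : Relator.RightUnique r) (hl : Relator.LeftUnique r)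
    (h : EqvGen r a b) : ReflTransGen r a b ∨ ReflTransGen r b a := by
  induction h with
  | rel a b hab => exact Or.inl (.single hab)
  | refl a => exact Or.inl .refl
  | symm a b _ ih => exact ih.symm
  | trans a b c _ _ ih₁ ih₂ =>
    rcases ih₁ with hab | hba <;> rcases ih₂ with hbc | hcb
    · exact Or.inl (hab.trans hbc)
    · have hl' : Relator.RightUnique (Function.swap r) := fun _ _ _ h₁ h₂ => hl h₁ h₂
      rw [← reflTransGen_swap] at hab hcb
      rcases hab.total_of_right_unique hl' hcb with h | h
      · exact Or.inr (reflTransGen_swap.1 h)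
      · exact Or.inl (reflTransGen_swap.1 h)
    · exact hba.total_of_right_unique hr hbc
    · exact Or.inr (hcb.trans hba)

end RelationChains

section PairCounting

variable {α β : Type*}

lemma card_filter_product_eq_sum_left (s : Finset α) (t : Finset β) (R : α → β → Prop) :
    #((s ×ˢ t).filter fun z => R z.1 z.2) = ∑ a ∈ s, #(t.filter (R a)) := by
  simp only [card_eq_sum_ones, sum_filter, sum_product]

lemma card_filter_product_eq_sum_right (s : Finset α) (t : Finset β) (R : α → β → Prop) :
    #((s ×ˢ t).filter fun z => R z.1 z.2) = ∑ b ∈ t, #(s.filter (R · b)) := by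
  simp only [card_eq_sum_ones, sum_filter, sum_product_right]

lemma card_filter_product_image [DecidableEq β] {s : Finset α} {f : α → β}
    (hf : Set.InjOn f s) {R : α → α → Prop} {R' : β → β → Prop}
    (hR : ∀ a ∈ s, ∀ b ∈ s, R' (f a) (f b) ↔ R a b) :
    #((s.image f ×ˢ s.image f).filter fun z => R' z.1 z.2) =
      #((s ×ˢ s).filter fun z => R z.1 z.2) := by
  have : (s.image f ×ˢ s.image f).filter (fun z => R' z.1 z.2) =
      ((s ×ˢ s).filter fun z => R z.1 z.2).image (Prod.map f f) := by
    ext ⟨x, y⟩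
    simp only [mem_filter, mem_product, mem_image, Prod.exists, Prod.map, Prod.mk.injEq]
    constructor
    · rintro ⟨⟨⟨a, ha, rfl⟩, ⟨b, hb, rfl⟩⟩, h⟩
      exact ⟨a, b, ⟨⟨ha, hb⟩, (hR a ha b hb).1 h⟩, rfl, rfl⟩
    · rintro ⟨a, b, ⟨⟨ha, hb⟩, h⟩, rfl, rfl⟩
      exact ⟨⟨⟨a, ha, rfl⟩, ⟨b, hb, rfl⟩⟩, (hR a ha b hb).2 h⟩
  rw [this, card_image_of_injOn]
  refine (hf.prodMap hf).mono fun z hz => ?_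
  simpa using (mem_product.1 (mem_filter.1 hz).1)

end PairCounting


namespace ArcMatching

variable {O : Finset ℤ} {A B : Finset (ℤ × ℤ)} {p q : ℤ × ℤ} {c : ℤ}

def openers (A : Finset (ℤ × ℤ)) : Finset ℤ := A.image Prod.fst

def closers (A : Finset (ℤ × ℤ)) : Finset ℤ := A.image Prod.snd

structure IsMatchingOn (O : Finset ℤ) (A : Finset (ℤ × ℤ)) : Prop where
  fst_mem : ∀ p ∈ A, p.1 ∈ O
  fst_lt_snd : ∀ p ∈ A, p.1 < p.2
  injOn_fst : Set.InjOn Prod.fst (A : Set (ℤ × ℤ))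
  injOn_snd : Set.InjOn Prod.snd (A : Set (ℤ × ℤ))

lemma IsMatchingOn.mono (hA : IsMatchingOn O A) (hBA : B ⊆ A) : IsMatchingOn O B :=
  ⟨fun p hp => hA.fst_mem p (hBA hp), fun p hp => hA.fst_lt_snd p (hBA hp),
    hA.injOn_fst.mono (by simpa using hBA), hA.injOn_snd.mono (by simpa using hBA)⟩

lemma IsMatchingOn.insert (hB : IsMatchingOn O B) (h1 : p.1 ∈ O) (h12 : p.1 < p.2)
    (ho : p.1 ∉ openers B) (hc : p.2 ∉ closers B) : IsMatchingOn O (insert p B) := by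
  have hpB : p ∉ (B : Set (ℤ × ℤ)) := fun h => ho (mem_image_of_mem _ h)
  refine ⟨?_, ?_, ?_, ?_⟩
  · simpa [h1] using hB.fst_mem
  · simpa [h12] using hB.fst_lt_snd
  · rw [coe_insert, Set.injOn_insert hpB]
    exact ⟨hB.injOn_fst, fun h => ho (by simpa [openers] using h)⟩
  · rw [coe_insert, Set.injOn_insert hpB]
    exact ⟨hB.injOn_snd, fun h => hc (by simpa [closers] using h)⟩

lemma IsMatchingOn.openers_subset (hA : IsMatchingOn O A) : openers A ⊆ O := fun _ ho => by
  obtain ⟨p, hp, rfl⟩ := mem_image.1 ho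
  exact hA.fst_mem p hp

lemma IsMatchingOn.card_closers (hA : IsMatchingOn O A) : #(closers A) = #A :=
  card_image_of_injOn hA.injOn_snd

lemma IsMatchingOn.card_openers (hA : IsMatchingOn O A) : #(openers A) = #A :=
  card_image_of_injOn hA.injOn_fst

/-- Openers of `O` left of `c` that are still open at `c`; an opener without an arc in `A`
never closes. -/
def openAt (O : Finset ℤ) (A : Finset (ℤ × ℤ)) (c : ℤ) : Finset ℤ :=
  O.filter fun o => o < c ∧ ∀ q ∈ A, q.1 = o → c ≤ q.2

def crossStat (O : Finset ℤ) (A : Finset (ℤ × ℤ)) : ℕ :=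
  ∑ p ∈ A, #((openAt O A p.2).filter (p.1 < ·))

def nestStat (O : Finset ℤ) (A : Finset (ℤ × ℤ)) : ℕ :=
  ∑ p ∈ A, #((openAt O A p.2).filter (· < p.1))

lemma openAt_insert (hc : c ≤ p.2) : openAt O (insert p B) c = openAt O B c := by
  unfold openAt
  refine filter_congr fun o _ => and_congr_right fun _ => ?_
  simp only [mem_insert, forall_eq_or_imp]
  exact ⟨And.right, fun h => ⟨fun _ => hc, h⟩⟩

lemma openAt_eq_sdiff (hB : ∀ q ∈ B, q.2 < c) :
    openAt O B c = O.filter (· < c) \ openers B := by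
  ext o
  simp only [openAt, openers, mem_filter, mem_sdiff, mem_image]
  constructor
  · rintro ⟨hO, hoc, h⟩
    exact ⟨⟨hO, hoc⟩, fun ⟨q, hq, hqo⟩ => (h q hq hqo).not_gt (hB q hq)⟩
  · rintro ⟨⟨hO, hoc⟩, h⟩
    exact ⟨hO, hoc, fun q hq hqo => absurd ⟨q, hq, hqo⟩ h⟩

lemma card_openAt (hB : IsMatchingOn O B) (hlt : ∀ q ∈ B, q.2 < c) :
    #(openAt O B c) = #(O.filter (· < c)) - #B := by
  rw [openAt_eq_sdiff hlt, card_sdiff_of_subset, hB.card_openers]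
  intro o ho
  obtain ⟨q, hq, rfl⟩ := mem_image.1 ho
  exact mem_filter.2 ⟨hB.fst_mem q hq, (hB.fst_lt_snd q hq).trans (hlt q hq)⟩

lemma sum_insert_openAt {f : ℤ × ℤ → Finset ℤ → ℕ} (hp : p ∉ B)
    (hlt : ∀ q ∈ B, q.2 < p.2) :
    ∑ q ∈ insert p B, f q (openAt O (insert p B) q.2) =
      f p (openAt O B p.2) + ∑ q ∈ B, f q (openAt O B q.2) := by
  rw [sum_insert hp, openAt_insert le_rfl]
  congr 1
  exact sum_congr rfl fun q hq => by rw [openAt_insert (hlt q hq).le]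

lemma crossStat_insert (hp : p ∉ B) (hlt : ∀ q ∈ B, q.2 < p.2) :
    crossStat O (insert p B) = #((openAt O B p.2).filter (p.1 < ·)) + crossStat O B :=
  sum_insert_openAt (f := fun q s => #(s.filter (q.1 < ·))) hp hlt

lemma nestStat_insert (hp : p ∉ B) (hlt : ∀ q ∈ B, q.2 < p.2) :
    nestStat O (insert p B) = #((openAt O B p.2).filter (· < p.1)) + nestStat O B :=
  sum_insert_openAt (f := fun q s => #(s.filter (· < q.1))) hp hlt

def lastArc (A : Finset (ℤ × ℤ)) : ℤ × ℤ :=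
  if h : A.Nonempty then (A.exists_max_image Prod.snd h).choose else 0

lemma lastArc_mem (h : A.Nonempty) : lastArc A ∈ A := by
  rw [lastArc, dif_pos h]; exact (A.exists_max_image Prod.snd h).choose_spec.1

lemma snd_le_lastArc (hq : q ∈ A) : q.2 ≤ (lastArc A).2 := by
  rw [lastArc, dif_pos ⟨q, hq⟩]
  exact (A.exists_max_image Prod.snd ⟨q, hq⟩).choose_spec.2 q hq

lemma lastArc_eq (hA : Set.InjOn Prod.snd (A : Set (ℤ × ℤ))) (hp : p ∈ A)
    (hmax : ∀ q ∈ A, q.2 ≤ p.2) : lastArc A = p :=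
  hA (lastArc_mem ⟨p, hp⟩) hp ((hmax _ (lastArc_mem ⟨p, hp⟩)).antisymm (snd_le_lastArc hp))

lemma snd_lt_lastArc (hA : Set.InjOn Prod.snd (A : Set (ℤ × ℤ)))
    (hq : q ∈ A.erase (lastArc A)) : q.2 < (lastArc A).2 :=
  (snd_le_lastArc (mem_of_mem_erase hq)).lt_of_ne fun h =>
    ne_of_mem_erase hq (hA (mem_of_mem_erase hq) (lastArc_mem ⟨q, mem_of_mem_erase hq⟩) h)

/-- The arc `p`, added on top of the image `K` of `B`, is re-attached to the opener at the mirror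
position of `p.1` among the openers open at `p.2`. -/
def reattach (O : Finset ℤ) (B K : Finset (ℤ × ℤ)) (p : ℤ × ℤ) : ℤ × ℤ :=
  (rankMirror (openAt O B p.2) (openAt O K p.2) p.1, p.2)

lemma reattach_snd {K : Finset (ℤ × ℤ)} : (reattach O B K p).2 = p.2 := rfl

/-- The Kasraoui–Zeng involution: arcs are re-attached from the rightmost closer leftwards.
Mirroring the opener swaps the numbers of open openers to its left and to its right, that is,
the nestings and crossings created by the arc. -/
def crossNestSwap (O : Finset ℤ) (A : Finset (ℤ × ℤ)) : Finset (ℤ × ℤ) :=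
  if _ : A.Nonempty then
    insert (reattach O (A.erase (lastArc A)) (crossNestSwap O (A.erase (lastArc A))) (lastArc A))
      (crossNestSwap O (A.erase (lastArc A)))
  else ∅
termination_by #A
decreasing_by exact card_erase_lt_of_mem (lastArc_mem ‹_›)

lemma crossNestSwap_empty : crossNestSwap O ∅ = ∅ := by
  rw [crossNestSwap, dif_neg Finset.not_nonempty_empty]

lemma crossNestSwap_of_nonempty (h : A.Nonempty) :
    crossNestSwap O A =
      insert (reattach O (A.erase (lastArc A)) (crossNestSwap O (A.erase (lastArc A))) (lastArc A))
        (crossNestSwap O (A.erase (lastArc A))) := by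
  rw [crossNestSwap, dif_pos h]

section Reattach

variable {K : Finset (ℤ × ℤ)} (hcl : closers K = closers B) (hlt : ∀ q ∈ B, q.2 < p.2)
include hcl hlt

lemma snd_lt_of_closers_eq : ∀ q ∈ K, q.2 < p.2 := fun q hq => by
  obtain ⟨r, hr, hrq⟩ := mem_image.1 (hcl ▸ mem_image_of_mem Prod.snd hq : q.2 ∈ closers B)
  exact hrq ▸ hlt r hr

lemma reattach_notMem : reattach O B K p ∉ K := fun h =>
  (snd_lt_of_closers_eq hcl hlt _ h).false

variable (hB : IsMatchingOn O B) (hK : IsMatchingOn O K)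
include hB hK

lemma card_openAt_eq_of_closers_eq : #(openAt O B p.2) = #(openAt O K p.2) := by
  rw [card_openAt hB hlt, card_openAt hK (snd_lt_of_closers_eq hcl hlt),
    ← hB.card_closers, ← hK.card_closers, hcl]

variable (hp : p.1 ∈ openAt O B p.2)
include hp

lemma reattach_fst_mem : (reattach O B K p).1 ∈ openAt O K p.2 :=
  rankMirror_mem (card_openAt_eq_of_closers_eq hcl hlt hB hK) hp

lemma isMatchingOn_insert_reattach : IsMatchingOn O (insert (reattach O B K p) K) := by
  have hK' := snd_lt_of_closers_eq hcl hlt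
  have hmem := reattach_fst_mem hcl hlt hB hK hp
  rw [openAt_eq_sdiff hK', mem_sdiff, mem_filter] at hmem
  refine hK.insert hmem.1.1 hmem.1.2 hmem.2 fun h => ?_
  obtain ⟨q, hq, hqp⟩ := mem_image.1 h
  exact (hK' q hq).ne hqp

lemma reattach_reattach : reattach O K B (reattach O B K p) = p :=
  Prod.ext (rankMirror_rankMirror (card_openAt_eq_of_closers_eq hcl hlt hB hK) hp) rfl

lemma card_filter_gt_reattach :
    #((openAt O K p.2).filter ((reattach O B K p).1 < ·)) =
      #((openAt O B p.2).filter (· < p.1)) :=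
  card_filter_gt_rankMirror (card_openAt_eq_of_closers_eq hcl hlt hB hK) hp

end Reattach

lemma IsMatchingOn.lastArc_fst_mem_openAt (hA : IsMatchingOn O A) (hne : A.Nonempty) :
    (lastArc A).1 ∈ openAt O (A.erase (lastArc A)) (lastArc A).2 := by
  have hp := lastArc_mem hne
  refine mem_filter.2 ⟨hA.fst_mem _ hp, hA.fst_lt_snd _ hp, fun q hq hqp => ?_⟩
  exact absurd (hA.injOn_fst (mem_of_mem_erase hq) hp hqp) (ne_of_mem_erase hq)

lemma isMatchingOn_crossNestSwap_and_closers (hA : IsMatchingOn O A) :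
    IsMatchingOn O (crossNestSwap O A) ∧ closers (crossNestSwap O A) = closers A := by
  induction A using Finset.strongInduction with
  | H A ih =>
  rcases A.eq_empty_or_nonempty with rfl | hne
  · rw [crossNestSwap_empty]; exact ⟨hA, rfl⟩
  have hB := hA.mono (erase_subset (lastArc A) A)
  obtain ⟨hK, hcl⟩ := ih _ (erase_ssubset (lastArc_mem hne)) hB
  have hlt := fun q (hq : q ∈ A.erase (lastArc A)) => snd_lt_lastArc hA.injOn_snd hq
  rw [crossNestSwap_of_nonempty hne]
  refine ⟨isMatchingOn_insert_reattach hcl hlt hB hK (hA.lastArc_fst_mem_openAt hne), ?_⟩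
  conv_rhs => rw [← insert_erase (lastArc_mem hne)]
  simp only [closers, image_insert] at hcl ⊢
  rw [hcl]
  rfl

lemma IsMatchingOn.crossNestSwap (hA : IsMatchingOn O A) :
    IsMatchingOn O (crossNestSwap O A) :=
  (isMatchingOn_crossNestSwap_and_closers hA).1

lemma closers_crossNestSwap (hA : IsMatchingOn O A) :
    closers (crossNestSwap O A) = closers A :=
  (isMatchingOn_crossNestSwap_and_closers hA).2

lemma card_crossNestSwap (hA : IsMatchingOn O A) : #(crossNestSwap O A) = #A := by
  rw [← hA.crossNestSwap.card_closers, closers_crossNestSwap hA, hA.card_closers]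

theorem crossNestSwap_crossNestSwap (hA : IsMatchingOn O A) :
    crossNestSwap O (crossNestSwap O A) = A := by
  induction A using Finset.strongInduction with
  | H A ih =>
  rcases A.eq_empty_or_nonempty with rfl | hne
  · rw [crossNestSwap_empty, crossNestSwap_empty]
  set p := lastArc A
  set B := A.erase p
  have hB := hA.mono (erase_subset p A)
  have hcl := closers_crossNestSwap hB
  have hlt := fun q (hq : q ∈ B) => snd_lt_lastArc hA.injOn_snd hq
  have hlt' := snd_lt_of_closers_eq hcl hlt
  have hp := hA.lastArc_fst_mem_openAt hne
  have hA' := isMatchingOn_insert_reattach hcl hlt hB hB.crossNestSwap hp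
  have hlast : lastArc (insert (reattach O B (crossNestSwap O B) p) (crossNestSwap O B)) =
      reattach O B (crossNestSwap O B) p :=
    lastArc_eq hA'.injOn_snd (mem_insert_self _ _)
      ((forall_mem_insert _ _ _).2 ⟨le_rfl, fun q hq => (hlt' q hq).le⟩)
  rw [crossNestSwap_of_nonempty hne, crossNestSwap_of_nonempty (insert_nonempty _ _), hlast,
    erase_insert (reattach_notMem hcl hlt), ih B (erase_ssubset (lastArc_mem hne)) hB,
    reattach_reattach hcl hlt hB hB.crossNestSwap hp, insert_erase (lastArc_mem hne)]

theorem crossStat_crossNestSwap (hA : IsMatchingOn O A) :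
    crossStat O (crossNestSwap O A) = nestStat O A := by
  induction A using Finset.strongInduction with
  | H A ih =>
  rcases A.eq_empty_or_nonempty with rfl | hne
  · rw [crossNestSwap_empty]; rfl
  set p := lastArc A
  set B := A.erase p
  have hB := hA.mono (erase_subset p A)
  have hcl := closers_crossNestSwap hB
  have hlt := fun q (hq : q ∈ B) => snd_lt_lastArc hA.injOn_snd hq
  rw [crossNestSwap_of_nonempty hne,
    crossStat_insert (reattach_notMem hcl hlt) (snd_lt_of_closers_eq hcl hlt), reattach_snd,
    card_filter_gt_reattach hcl hlt hB hB.crossNestSwap (hA.lastArc_fst_mem_openAt hne),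
    ih B (erase_ssubset (lastArc_mem hne)) hB]
  conv_rhs => rw [← insert_erase (lastArc_mem hne), nestStat_insert (notMem_erase p A) hlt]

theorem nestStat_crossNestSwap (hA : IsMatchingOn O A) :
    nestStat O (crossNestSwap O A) = crossStat O A := by
  conv_rhs => rw [← crossNestSwap_crossNestSwap hA]
  exact (crossStat_crossNestSwap hA.crossNestSwap).symm

end ArcMatching

namespace SetPartitionC

open Relation
open ArcMatching (IsMatchingOn openAt crossStat nestStat crossNestSwap)

variable {n : ℕ} {P : SetPartitionC n} {A : Finset (ℤ × ℤ)} {B B' : Finset ℤ} {i x y : ℤ}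
  {p q : ℤ × ℤ}

lemma mem_pmn : i ∈ pmn n ↔ i ≠ 0 ∧ -(n : ℤ) ≤ i ∧ i ≤ n := by
  simp [pmn, and_comm]

lemma neg_mem_pmn (hi : i ∈ pmn n) : -i ∈ pmn n := by
  rw [mem_pmn] at hi ⊢; omega

lemma nestOrd_of_pos (h : 0 < i) : nestOrd n i = i := if_pos h

lemma nestOrd_of_neg (h : i < 0) : nestOrd n i = 2 * n + 1 + i := if_neg h.not_gt

lemma crossOrd_of_pos (h : 0 < i) : crossOrd n i = i := if_pos h

lemma crossOrd_of_neg (h : i < 0) : crossOrd n i = n - i := if_neg h.not_gt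

lemma nestOrd_neg (hi : i ∈ pmn n) : nestOrd n (-i) = 2 * n + 1 - nestOrd n i := by
  rw [mem_pmn] at hi
  unfold nestOrd
  split_ifs <;> omega

lemma nestOrd_injOn : Set.InjOn (nestOrd n) (pmn n) := by
  intro i hi j hj h
  rw [mem_coe, mem_pmn] at hi hj
  unfold nestOrd at h
  split_ifs at h <;> omega

lemma mem_negSet : x ∈ negSet B ↔ -x ∈ B := by
  simp [negSet, neg_eq_iff_eq_neg]

/-- The sets of arcs `(opener, closer)` with positive opener of type `C_n` set partitions are
exactly these (`posArcs_isPosArcSet`, `posArcs_ofPosArcs`); the last field reflects that there is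
at most one zero block. -/
structure IsPosArcSet (n : ℕ) (A : Finset (ℤ × ℤ)) : Prop where
  fst_pos : ∀ p ∈ A, 0 < p.1
  fst_le : ∀ p ∈ A, p.1 ≤ n
  snd_mem : ∀ p ∈ A, p.2 ∈ pmn n
  nestOrd_lt : ∀ p ∈ A, nestOrd n p.1 < nestOrd n p.2
  injOn_fst : Set.InjOn Prod.fst (A : Set (ℤ × ℤ))
  injOn_snd : Set.InjOn Prod.snd (A : Set (ℤ × ℤ))
  mirror_mem : ∀ p ∈ A, p.2 < 0 → (-p.2, -p.1) ∈ A
  zeroArc_unique : ∀ p ∈ A, ∀ q ∈ A, p.2 = -p.1 → q.2 = -q.1 → p = q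

/-- The arc relation of the whole partition: arcs with negative opener are the mirror images
`(-j, -i)` of the arcs `(i, j)` with positive opener. -/
def arcRel (A : Finset (ℤ × ℤ)) (x y : ℤ) : Prop := (x, y) ∈ A ∨ (-y, -x) ∈ A

lemma arcRel_neg_iff : arcRel A (-y) (-x) ↔ arcRel A x y := by
  simp only [arcRel, neg_neg, or_comm]

lemma eqvGen_arcRel_neg (h : EqvGen (arcRel A) x y) : EqvGen (arcRel A) (-x) (-y) := by
  induction h with
  | rel a b hab => exact .symm _ _ (.rel _ _ (arcRel_neg_iff.2 hab))
  | refl a => exact .refl _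
  | symm a b _ ih => exact .symm _ _ ih
  | trans a b c _ _ ih₁ ih₂ => exact .trans _ _ _ ih₁ ih₂

def posPart (A : Finset (ℤ × ℤ)) : Finset (ℤ × ℤ) := A.filter fun p => 0 < p.2

def negPart (A : Finset (ℤ × ℤ)) : Finset (ℤ × ℤ) := A.filter fun p => p.2 < 0

namespace IsPosArcSet

variable (hA : IsPosArcSet n A)
include hA

lemma bounds (hp : p ∈ A) :
    0 < p.1 ∧ p.1 ≤ n ∧ p.2 ≠ 0 ∧ -(n : ℤ) ≤ p.2 ∧ p.2 ≤ n :=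
  ⟨hA.fst_pos p hp, hA.fst_le p hp, mem_pmn.1 (hA.snd_mem p hp)⟩

lemma fst_mem (hp : p ∈ A) : p.1 ∈ pmn n := by
  have := hA.bounds hp; rw [mem_pmn]; omega

lemma fst_lt_snd_of_pos (hp : p ∈ A) (h : 0 < p.2) : p.1 < p.2 := by
  simpa [nestOrd_of_pos (hA.fst_pos p hp), nestOrd_of_pos h] using hA.nestOrd_lt p hp

lemma arcRel_mem_pmn (h : arcRel A x y) : x ∈ pmn n ∧ y ∈ pmn n := by
  rcases h with h | h
  · exact ⟨hA.fst_mem h, hA.snd_mem _ h⟩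
  · simpa using And.symm ⟨neg_mem_pmn (hA.fst_mem h), neg_mem_pmn (hA.snd_mem _ h)⟩

lemma arcRel_nestOrd_lt (h : arcRel A x y) : nestOrd n x < nestOrd n y := by
  obtain ⟨hx, hy⟩ := hA.arcRel_mem_pmn h
  rcases h with h | h
  · exact hA.nestOrd_lt _ h
  · have := hA.nestOrd_lt _ h
    rw [nestOrd_neg hy, nestOrd_neg hx] at this
    omega

lemma arcRel_rightUnique : Relator.RightUnique (arcRel A) := by
  have key : ∀ {x y z}, (x, y) ∈ A → (-z, -x) ∈ A → y = z := fun {x y z} h₁ h₂ => by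
    have h₃ := hA.mirror_mem _ h₂ (by simpa using hA.fst_pos _ h₁)
    simp only [neg_neg] at h₃
    exact congrArg Prod.snd (hA.injOn_fst h₁ h₃ rfl)
  rintro x y z (h₁ | h₁) (h₂ | h₂)
  · exact congrArg Prod.snd (hA.injOn_fst h₁ h₂ rfl)
  · exact key h₁ h₂
  · exact (key h₂ h₁).symm
  · exact neg_injective (congrArg Prod.fst (hA.injOn_snd h₁ h₂ rfl))

lemma arcRel_leftUnique : Relator.LeftUnique (arcRel A) := fun _ _ _ h₁ h₂ =>
  neg_injective (hA.arcRel_rightUnique (arcRel_neg_iff.2 h₁) (arcRel_neg_iff.2 h₂))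

lemma nestOrd_le_of_reflTransGen (h : ReflTransGen (arcRel A) x y) :
    nestOrd n x ≤ nestOrd n y := by
  induction h with
  | refl => exact le_rfl
  | tail _ hbc ih => exact ih.trans (hA.arcRel_nestOrd_lt hbc).le

lemma reflTransGen_of_eqvGen (h : EqvGen (arcRel A) x y) (hxy : nestOrd n x < nestOrd n y) :
    ReflTransGen (arcRel A) x y :=
  (EqvGen.reflTransGen_total hA.arcRel_rightUnique hA.arcRel_leftUnique h).resolve_right
    fun h' => (hA.nestOrd_le_of_reflTransGen h').not_gt hxy

lemma exists_arcRel_of_eqvGen (h : EqvGen (arcRel A) x y) (hxy : nestOrd n x < nestOrd n y) :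
    ∃ w, arcRel A x w ∧ nestOrd n w ≤ nestOrd n y := by
  rcases (hA.reflTransGen_of_eqvGen h hxy).cases_head with rfl | ⟨w, hxw, hwy⟩
  · exact absurd hxy (lt_irrefl _)
  · exact ⟨w, hxw, hA.nestOrd_le_of_reflTransGen hwy⟩

end IsPosArcSet

/-! ### The partition generated by a set of arcs with positive opener -/

def blockOf (n : ℕ) (A : Finset (ℤ × ℤ)) (x : ℤ) : Finset ℤ :=
  (pmn n).filter (EqvGen (arcRel A) x)

lemma mem_blockOf : y ∈ blockOf n A x ↔ y ∈ pmn n ∧ EqvGen (arcRel A) x y := mem_filter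

lemma mem_blockOf_self (hx : x ∈ pmn n) : x ∈ blockOf n A x := mem_blockOf.2 ⟨hx, .refl x⟩

lemma blockOf_eq_blockOf (h : EqvGen (arcRel A) x y) : blockOf n A x = blockOf n A y :=
  filter_congr fun _ _ => ⟨(EqvGen.trans _ _ _ (.symm _ _ h) ·), (EqvGen.trans _ _ _ h ·)⟩

lemma negSet_blockOf : negSet (blockOf n A x) = blockOf n A (-x) := by
  ext y
  rw [mem_negSet, mem_blockOf, mem_blockOf]
  exact ⟨fun ⟨h₁, h₂⟩ =>
      ⟨by simpa using neg_mem_pmn h₁, by simpa using eqvGen_arcRel_neg h₂⟩,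
    fun ⟨h₁, h₂⟩ => ⟨neg_mem_pmn h₁, by simpa using eqvGen_arcRel_neg h₂⟩⟩

def blocksOf (n : ℕ) (A : Finset (ℤ × ℤ)) : Finset (Finset ℤ) :=
  (pmn n).image (blockOf n A)

/-- The largest positive element `y` of a self-negative class is followed by `-y`. -/
lemma IsPosArcSet.exists_zeroArc (hA : IsPosArcSet n A) (hx : x ∈ pmn n)
    (hself : negSet (blockOf n A x) = blockOf n A x) : ∃ y ∈ blockOf n A x, (y, -y) ∈ A := by
  set C := blockOf n A x
  have hneg : ∀ {z}, z ∈ C → -z ∈ C := fun hz => by rwa [← hself, mem_negSet, neg_neg]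
  have hpos : (C.filter (0 < ·)).Nonempty := by
    rcases lt_trichotomy x 0 with h | h | h
    · exact ⟨-x, mem_filter.2 ⟨hneg (mem_blockOf_self hx), by omega⟩⟩
    · exact absurd h (mem_pmn.1 hx).1
    · exact ⟨x, mem_filter.2 ⟨mem_blockOf_self hx, h⟩⟩
  obtain ⟨y, hy, hymax⟩ := exists_max_image _ id hpos
  obtain ⟨hyC, hy0⟩ := mem_filter.1 hy
  have hyp := (mem_blockOf.1 hyC).1
  have hmax : ∀ z ∈ C, 0 < z → z ≤ y := fun z hz hz0 => hymax z (mem_filter.2 ⟨hz, hz0⟩)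
  have hEqv : EqvGen (arcRel A) y (-y) :=
    .trans _ _ _ (.symm _ _ (mem_blockOf.1 hyC).2) (mem_blockOf.1 (hneg hyC)).2
  obtain ⟨w, hyw, hw⟩ := hA.exists_arcRel_of_eqvGen hEqv (by
    rw [nestOrd_neg hyp, nestOrd_of_pos hy0]; have := (mem_pmn.1 hyp).2.2; omega)
  have hwC : w ∈ C := mem_blockOf.2
    ⟨(hA.arcRel_mem_pmn hyw).2, .trans _ _ _ (mem_blockOf.1 hyC).2 (.rel _ _ hyw)⟩
  have hlt := hA.arcRel_nestOrd_lt hyw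
  have hw' : w = -y := by
    rw [nestOrd_neg hyp, nestOrd_of_pos hy0] at hw
    rw [nestOrd_of_pos hy0] at hlt
    rcases lt_trichotomy w 0 with hw0 | hw0 | hw0
    · have := hmax (-w) (hneg hwC) (by omega)
      rw [nestOrd_of_neg hw0] at hw
      omega
    · exact absurd hw0 (mem_pmn.1 (hA.arcRel_mem_pmn hyw).2).1
    · have := hmax w hwC hw0
      rw [nestOrd_of_pos hw0] at hlt
      omega
  subst hw'
  exact ⟨y, hyC, hyw.elim id (by simpa using ·)⟩

def ofPosArcs (A : Finset (ℤ × ℤ)) (hA : IsPosArcSet n A) : SetPartitionC n where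
  blocks := blocksOf n A
  nonempty := by
    simp only [blocksOf, forall_mem_image]
    exact fun x hx => ⟨x, mem_blockOf_self hx⟩
  disj := by
    simp only [blocksOf, forall_mem_image]
    intro x _ x' _ hne
    refine disjoint_left.2 fun z hz hz' => hne ?_
    rw [blockOf_eq_blockOf (mem_blockOf.1 hz).2, blockOf_eq_blockOf (mem_blockOf.1 hz').2]
  cover i := by
    simp only [blocksOf, exists_mem_image]
    refine ⟨fun ⟨x, _, hi⟩ => ?_, fun hi => ⟨i, ?_, mem_blockOf_self ?_⟩⟩ <;>
      simp_all [mem_blockOf, mem_pmn, abs_le]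
  symm := by
    simp only [blocksOf, forall_mem_image, negSet_blockOf]
    exact fun x hx => mem_image_of_mem _ (neg_mem_pmn hx)
  zeroBlock := by
    simp only [blocksOf, forall_mem_image]
    intro x hx x' hx' hself hself'
    obtain ⟨y, hy, hyA⟩ := hA.exists_zeroArc hx hself
    obtain ⟨y', hy', hyA'⟩ := hA.exists_zeroArc hx' hself'
    obtain rfl : y = y' := congrArg Prod.fst (hA.zeroArc_unique _ hyA _ hyA' rfl rfl)
    rw [blockOf_eq_blockOf (mem_blockOf.1 hy).2, blockOf_eq_blockOf (mem_blockOf.1 hy').2]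

/-! ### The arcs with positive opener of a partition -/

lemma mem_pmn_of_mem_block (hB : B ∈ P.blocks) (hx : x ∈ B) : x ∈ pmn n := by
  have := (P.cover x).1 ⟨B, hB, hx⟩; rw [mem_pmn]; rw [abs_le] at this; omega

lemma block_eq_of_mem (hB : B ∈ P.blocks) (hB' : B' ∈ P.blocks) (hx : x ∈ B)
    (hx' : x ∈ B') : B = B' :=
  by_contra fun hne => disjoint_left.1 (P.disj B hB B' hB' hne) hx hx'

lemma ext_blocks {Q : SetPartitionC n} (h : P.blocks = Q.blocks) : P = Q := by
  cases P; cases Q; simp_all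

lemma mem_arcs : p ∈ P.arcs ↔ P.IsArc p.1 p.2 := by
  refine mem_filter.trans ⟨And.right, fun h => ⟨?_, h⟩⟩
  obtain ⟨_, B, hB, h₁, h₂, _⟩ := h
  exact mem_product.2 ⟨mem_pmn_of_mem_block hB h₁, mem_pmn_of_mem_block hB h₂⟩

def posArcs (P : SetPartitionC n) : Finset (ℤ × ℤ) := P.arcs.filter fun p => 0 < p.1

lemma mem_posArcs : p ∈ posArcs P ↔ P.IsArc p.1 p.2 ∧ 0 < p.1 := by
  rw [posArcs, mem_filter, mem_arcs]

lemma IsArc.mem_pmn (h : P.IsArc x y) : x ∈ pmn n ∧ y ∈ pmn n := by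
  obtain ⟨_, B, hB, hx, hy, _⟩ := h
  exact ⟨mem_pmn_of_mem_block hB hx, mem_pmn_of_mem_block hB hy⟩

lemma IsArc.neg (h : P.IsArc x y) : P.IsArc (-y) (-x) := by
  obtain ⟨hx, hy⟩ := h.mem_pmn
  obtain ⟨hlt, B, hB, hxB, hyB, hbet⟩ := h
  refine ⟨by rw [nestOrd_neg hx, nestOrd_neg hy]; omega, negSet B, P.symm B hB,
    by rwa [mem_negSet, neg_neg], by rwa [mem_negSet, neg_neg], fun k hk hk' => ?_⟩
  have hk'' := mem_pmn_of_mem_block hB (mem_negSet.1 hk)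
  rw [nestOrd_neg hy, nestOrd_neg hx, ← neg_neg k, nestOrd_neg hk''] at hk'
  exact hbet _ (mem_negSet.1 hk) ⟨by omega, by omega⟩

lemma IsArc.nestOrd_le_of_mem (h : P.IsArc x y) (hB : B ∈ P.blocks) (hx : x ∈ B) {z : ℤ}
    (hz : z ∈ B) (hxz : nestOrd n x < nestOrd n z) : nestOrd n y ≤ nestOrd n z := by
  obtain ⟨_, B', hB', hx', _, hbet⟩ := h
  obtain rfl := block_eq_of_mem hB hB' hx hx'
  exact not_lt.1 fun hzy => hbet z hz ⟨hxz, hzy⟩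

lemma IsArc.le_of_zeroArc (h : P.IsArc x (-x)) (hx : 0 < x) (hB : B ∈ P.blocks) (hxB : x ∈ B)
    {z : ℤ} (hz : z ∈ B) (hz0 : 0 < z) : z ≤ x := by
  by_contra hxz
  have := h.nestOrd_le_of_mem hB hxB hz (by rw [nestOrd_of_pos hx, nestOrd_of_pos hz0]; omega)
  rw [nestOrd_neg h.mem_pmn.1, nestOrd_of_pos hx, nestOrd_of_pos hz0] at this
  have := (SetPartitionC.mem_pmn.1 (mem_pmn_of_mem_block hB hz)).2.2
  omega

lemma isArc_rightUnique : Relator.RightUnique P.IsArc := fun x y z hy hz => by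
  obtain ⟨hxy, B, hB, hx, hyB, _⟩ := id hy
  obtain ⟨hxz, B', hB', hx', hzB, _⟩ := id hz
  obtain rfl := block_eq_of_mem hB hB' hx hx'
  exact nestOrd_injOn (mem_pmn_of_mem_block hB hyB) (mem_pmn_of_mem_block hB hzB)
    ((hy.nestOrd_le_of_mem hB hx hzB hxz).antisymm (hz.nestOrd_le_of_mem hB hx hyB hxy))

lemma isArc_leftUnique : Relator.LeftUnique P.IsArc := fun _ _ _ hx hy =>
  neg_injective (isArc_rightUnique hx.neg hy.neg)

lemma arcRel_posArcs : arcRel (posArcs P) = P.IsArc := by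
  ext x y
  simp only [arcRel, mem_posArcs]
  refine ⟨fun h => h.elim And.left fun h => by simpa using h.1.neg, fun h => ?_⟩
  obtain ⟨hx, hy⟩ := h.mem_pmn
  rcases lt_or_gt_of_ne (mem_pmn.1 hx).1 with hx0 | hx0
  · have hlt := h.1
    rw [nestOrd_of_neg hx0] at hlt
    have hy0 : y < 0 := by
      by_contra hy0
      rw [nestOrd_of_pos (lt_of_le_of_ne (not_lt.1 hy0) (mem_pmn.1 hy).1.symm)] at hlt
      have := (mem_pmn.1 hy).2.2
      have := (mem_pmn.1 hx).2.1
      omega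
    exact Or.inr ⟨h.neg, by omega⟩
  · exact Or.inl ⟨h, hx0⟩

lemma posArcs_isPosArcSet (P : SetPartitionC n) : IsPosArcSet n (posArcs P) where
  fst_pos p hp := (mem_posArcs.1 hp).2
  fst_le p hp := (mem_pmn.1 (mem_posArcs.1 hp).1.mem_pmn.1).2.2
  snd_mem p hp := (mem_posArcs.1 hp).1.mem_pmn.2
  nestOrd_lt p hp := (mem_posArcs.1 hp).1.1
  injOn_fst p hp q hq h :=
    Prod.ext h (isArc_rightUnique (mem_posArcs.1 hp).1 (h ▸ (mem_posArcs.1 hq).1))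
  injOn_snd p hp q hq h :=
    Prod.ext (isArc_leftUnique (mem_posArcs.1 hp).1 (h ▸ (mem_posArcs.1 hq).1)) h
  mirror_mem p hp h := mem_posArcs.2 ⟨(mem_posArcs.1 hp).1.neg, neg_pos.2 h⟩
  zeroArc_unique p hp q hq hp' hq' := by
    obtain ⟨hpa, hp0⟩ := mem_posArcs.1 hp
    obtain ⟨hqa, hq0⟩ := mem_posArcs.1 hq
    obtain ⟨_, B, hB, hp1, hp2, _⟩ := id hpa
    obtain ⟨_, B', hB', hq1, hq2, _⟩ := id hqa
    have hself : ∀ {B x}, B ∈ P.blocks → x ∈ B → -x ∈ B → negSet B = B :=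
      fun hB hx hx' => block_eq_of_mem (P.symm _ hB) hB (mem_negSet.2 hx') hx
    obtain rfl := P.zeroBlock B hB B' hB' (hself hB hp1 (hp' ▸ hp2)) (hself hB' hq1 (hq' ▸ hq2))
    have h₁ := (hp' ▸ hpa).le_of_zeroArc hp0 hB hp1 hq1 hq0
    have h₂ := (hq' ▸ hqa).le_of_zeroArc hq0 hB hq1 hp1 hp0
    exact Prod.ext (h₂.antisymm h₁) (by rw [hp', hq', h₂.antisymm h₁])

lemma eqvGen_isArc_of_le (hB : B ∈ P.blocks) (hx : x ∈ B) (hy : y ∈ B)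
    (hxy : nestOrd n x ≤ nestOrd n y) : EqvGen P.IsArc x y := by
  induction h : (nestOrd n y - nestOrd n x).toNat using Nat.strong_induction_on
    generalizing y with
  | _ k ih =>
  rcases hxy.eq_or_lt with hxy | hxy
  · rw [nestOrd_injOn (mem_pmn_of_mem_block hB hx) (mem_pmn_of_mem_block hB hy) hxy]
    exact .refl _
  obtain ⟨z, hz, hzmax⟩ := exists_max_image (B.filter fun z => nestOrd n z < nestOrd n y)
    (nestOrd n) ⟨x, mem_filter.2 ⟨hx, hxy⟩⟩
  obtain ⟨hzB, hzy⟩ := mem_filter.1 hz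
  have harc : P.IsArc z y :=
    ⟨hzy, B, hB, hzB, hy, fun w hw hw' => (hzmax w (mem_filter.2 ⟨hw, hw'.2⟩)).not_gt hw'.1⟩
  exact .trans _ _ _ (ih _ (by omega) hzB (hzmax x (mem_filter.2 ⟨hx, hxy⟩)) rfl)
    (.rel _ _ harc)

lemma eqvGen_isArc_iff (hB : B ∈ P.blocks) (hx : x ∈ B) : EqvGen P.IsArc x y ↔ y ∈ B := by
  refine ⟨fun h => ?_, fun hy => ?_⟩
  · suffices ∀ B ∈ P.blocks, x ∈ B ↔ y ∈ B from (this B hB).1 hx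
    clear hx
    induction h with
    | rel a b hab =>
      obtain ⟨_, B₀, hB₀, ha, hb, _⟩ := hab
      exact fun B hB => ⟨fun h => block_eq_of_mem hB₀ hB ha h ▸ hb,
        fun h => block_eq_of_mem hB₀ hB hb h ▸ ha⟩
    | refl => exact fun _ _ => Iff.rfl
    | symm _ _ _ ih => exact fun B hB => (ih B hB).symm
    | trans _ _ _ _ _ ih₁ ih₂ => exact fun B hB => (ih₁ B hB).trans (ih₂ B hB)
  · rcases le_total (nestOrd n x) (nestOrd n y) with hxy | hyx
    · exact eqvGen_isArc_of_le hB hx hy hxy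
    · exact .symm _ _ (eqvGen_isArc_of_le hB hy hx hyx)

lemma blockOf_posArcs (hB : B ∈ P.blocks) (hx : x ∈ B) : blockOf n (posArcs P) x = B := by
  ext y
  rw [mem_blockOf, arcRel_posArcs, eqvGen_isArc_iff hB hx]
  exact ⟨And.right, fun hy => ⟨mem_pmn_of_mem_block hB hy, hy⟩⟩

lemma ofPosArcs_posArcs (P : SetPartitionC n) :
    ofPosArcs (posArcs P) (posArcs_isPosArcSet P) = P := by
  refine ext_blocks (Finset.ext fun B => ⟨fun hB => ?_, fun hB => ?_⟩)
  · obtain ⟨x, hx, rfl⟩ := mem_image.1 hB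
    obtain ⟨B, hB, hxB⟩ := (P.cover x).2 (by rw [abs_le]; have := mem_pmn.1 hx; omega)
    rwa [blockOf_posArcs hB hxB]
  · obtain ⟨x, hx⟩ := P.nonempty B hB
    exact mem_image.2 ⟨x, mem_pmn_of_mem_block hB hx, blockOf_posArcs hB hx⟩

lemma isArc_ofPosArcs_iff (hA : IsPosArcSet n A) :
    (ofPosArcs A hA).IsArc x y ↔ arcRel A x y := by
  refine ⟨fun ⟨hxy, B, hB, hx, hy, hbet⟩ => ?_, fun h => ?_⟩
  · obtain ⟨z, -, rfl⟩ := mem_image.1 hB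
    have hEqv : EqvGen (arcRel A) x y :=
      .trans _ _ _ (.symm _ _ (mem_blockOf.1 hx).2) (mem_blockOf.1 hy).2
    obtain ⟨w, hxw, hwy⟩ := hA.exists_arcRel_of_eqvGen hEqv hxy
    have hw : w ∈ blockOf n A z := mem_blockOf.2
      ⟨(hA.arcRel_mem_pmn hxw).2, .trans _ _ _ (mem_blockOf.1 hx).2 (.rel _ _ hxw)⟩
    rcases hwy.eq_or_lt with hwy | hwy
    · rwa [← nestOrd_injOn (hA.arcRel_mem_pmn hxw).2 (mem_blockOf.1 hy).1 hwy]
    · exact absurd ⟨hA.arcRel_nestOrd_lt hxw, hwy⟩ (hbet w hw)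
  · obtain ⟨hx, hy⟩ := hA.arcRel_mem_pmn h
    refine ⟨hA.arcRel_nestOrd_lt h, blockOf n A x, mem_image_of_mem _ hx, mem_blockOf_self hx,
      mem_blockOf.2 ⟨hy, .rel _ _ h⟩, fun z hz ⟨hxz, hzy⟩ => ?_⟩
    obtain ⟨w, hxw, hwz⟩ := hA.exists_arcRel_of_eqvGen (mem_blockOf.1 hz).2 hxz
    exact (hA.arcRel_rightUnique h hxw ▸ hwz).not_gt hzy

lemma posArcs_ofPosArcs (hA : IsPosArcSet n A) : posArcs (ofPosArcs A hA) = A := by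
  ext p
  rw [mem_posArcs, isArc_ofPosArcs_iff, arcRel]
  refine ⟨fun ⟨h, hp⟩ => h.elim id fun h => ?_, fun h => ⟨Or.inl h, hA.fst_pos p h⟩⟩
  simpa using hA.mirror_mem _ h (neg_neg_iff_pos.2 hp)

lemma posArcs_injective : Function.Injective (posArcs (n := n)) := fun P Q h => by
  rw [← ofPosArcs_posArcs P, ← ofPosArcs_posArcs Q]
  congr

lemma exists_isArc_of_lt (hB : B ∈ P.blocks) (hx : x ∈ B) {z : ℤ} (hz : z ∈ B)
    (hxz : nestOrd n x < nestOrd n z) : ∃ y, P.IsArc x y := by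
  have hEqv : EqvGen (arcRel (posArcs P)) x z := by
    rw [arcRel_posArcs]; exact (eqvGen_isArc_iff hB hx).2 hz
  obtain ⟨y, hxy, -⟩ := (posArcs_isPosArcSet P).exists_arcRel_of_eqvGen hEqv hxz
  exact ⟨y, arcRel_posArcs ▸ hxy⟩

lemma exists_isArc_of_gt (hB : B ∈ P.blocks) (hx : x ∈ B) {z : ℤ} (hz : z ∈ B)
    (hzx : nestOrd n z < nestOrd n x) : ∃ y, P.IsArc y x := by
  have hneg : ∀ {w : ℤ}, w ∈ B → -w ∈ negSet B := fun hw =>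
    mem_negSet.2 (by rwa [neg_neg])
  obtain ⟨y, hy⟩ := exists_isArc_of_lt (P.symm B hB) (hneg hx) (hneg hz) (by
    rw [nestOrd_neg (mem_pmn_of_mem_block hB hx), nestOrd_neg (mem_pmn_of_mem_block hB hz)]
    omega)
  exact ⟨-y, by simpa using hy.neg⟩

lemma openers_eq_openers_posArcs (P : SetPartitionC n) :
    P.openers = ArcMatching.openers (posArcs P) := by
  ext i
  simp only [openers, ArcMatching.openers, mem_filter, mem_Icc, mem_image, mem_posArcs]
  constructor
  · rintro ⟨⟨hi, -⟩, B, hB, hiB, j, hjB, hij⟩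
    obtain ⟨y, hy⟩ := exists_isArc_of_lt hB hiB hjB hij
    exact ⟨(i, y), ⟨hy, by omega⟩, rfl⟩
  · rintro ⟨q, ⟨hq, hq0⟩, rfl⟩
    obtain ⟨hlt, B, hB, h₁, h₂, -⟩ := id hq
    exact ⟨⟨hq0, (mem_pmn.1 hq.mem_pmn.1).2.2⟩, B, hB, h₁, q.2, h₂, hlt⟩

lemma closers_eq_closers_posArcs (P : SetPartitionC n) :
    P.closers = ArcMatching.closers (posPart (posArcs P)) := by
  ext i
  simp only [closers, ArcMatching.closers, posPart, mem_filter, mem_Icc, mem_image, mem_posArcs]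
  constructor
  · rintro ⟨⟨hi, hin⟩, B, hB, hiB, j, hjB, hji⟩
    obtain ⟨y, hy⟩ := exists_isArc_of_gt hB hiB hjB hji
    have hy0 : 0 < y := by
      have hlt := hy.1
      have := mem_pmn.1 hy.mem_pmn.1
      rw [nestOrd_of_pos (by omega : 0 < i)] at hlt
      unfold nestOrd at hlt
      split_ifs at hlt <;> omega
    exact ⟨(y, i), ⟨⟨hy, hy0⟩, by omega⟩, rfl⟩
  · rintro ⟨q, ⟨⟨hq, -⟩, hq0⟩, rfl⟩
    obtain ⟨hlt, B, hB, h₁, h₂, -⟩ := id hq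
    exact ⟨⟨hq0, (mem_pmn.1 hq.mem_pmn.2).2.2⟩, B, hB, h₂, q.1, h₁, hlt⟩

/-! ### Crossings and nestings in terms of the matching part -/

namespace IsPosArcSet

variable (hA : IsPosArcSet n A)
include hA

lemma filter_not_pos_eq_negPart : A.filter (fun p => ¬0 < p.2) = negPart A :=
  filter_congr fun p hp => by have := hA.bounds hp; omega

lemma crossRel_iff (hp : p ∈ A) (hq : q ∈ A) :
    CrossRel n p q ↔ p.1 < q.1 ∧ q.1 < crossOrd n p.2 ∧ crossOrd n p.2 < crossOrd n q.2 := by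
  have hcpr : ∀ {p}, p ∈ A → cpr n p = (p.1, crossOrd n p.2) := fun {p} hp => by
    have := hA.bounds hp
    have h : p.1 < crossOrd n p.2 := by
      unfold crossOrd; split_ifs with h
      · exact hA.fst_lt_snd_of_pos hp h
      · omega
    rw [cpr, crossOrd_of_pos (hA.fst_pos p hp), min_eq_left h.le, max_eq_right h.le]
  rw [CrossRel, hcpr hp, hcpr hq]

lemma crossRel_iff_of_snd_neg (hp : p ∈ A) (hq : q ∈ A) (hp2 : p.2 < 0) (hq2 : q.2 < 0) :
    CrossRel n p q ↔ p.1 < q.1 ∧ q.2 < p.2 := by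
  have := hA.bounds hp
  have := hA.bounds hq
  rw [hA.crossRel_iff hp hq, crossOrd_of_neg hp2, crossOrd_of_neg hq2]
  omega

lemma nestRel_iff_of_snd_neg (hp : p ∈ A) (hq : q ∈ A) (hp2 : p.2 < 0) (hq2 : q.2 < 0) :
    NestRel n p q ↔ p.1 < q.1 ∧ q.2 < p.2 := by
  rw [NestRel, nestOrd_of_pos (hA.fst_pos p hp), nestOrd_of_pos (hA.fst_pos q hq),
    nestOrd_of_neg hp2, nestOrd_of_neg hq2]
  omega

lemma snd_neg_of_crossRel (hp : p ∈ A) (hq : q ∈ A) (h : CrossRel n p q) (hp2 : p.2 < 0) :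
    q.2 < 0 := by
  have := hA.bounds hp
  have := hA.bounds hq
  rw [hA.crossRel_iff hp hq, crossOrd_of_neg hp2] at h
  unfold crossOrd at h
  split_ifs at h <;> omega

lemma snd_neg_of_nestRel (hp : p ∈ A) (hq : q ∈ A) (h : NestRel n p q) (hq2 : q.2 < 0) :
    p.2 < 0 := by
  have := hA.bounds hp
  have := hA.bounds hq
  have h := h.2
  rw [nestOrd_of_neg hq2] at h
  unfold nestOrd at h
  split_ifs at h <;> omega

lemma image_fst_filter_crossRel (hp : p ∈ posPart A) :
    (A.filter (CrossRel n p)).image Prod.fst =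
      (openAt (ArcMatching.openers A) (posPart A) p.2).filter (p.1 < ·) := by
  obtain ⟨hpA, hp2⟩ := mem_filter.1 hp
  ext o
  simp only [mem_image, mem_filter, openAt, ArcMatching.openers]
  constructor
  · rintro ⟨q, ⟨hq, hpq⟩, rfl⟩
    rw [hA.crossRel_iff hpA hq, crossOrd_of_pos hp2] at hpq
    refine ⟨⟨⟨q, hq, rfl⟩, hpq.2.1, fun r hr hrq => ?_⟩, hpq.1⟩
    obtain ⟨hr, hr2⟩ := mem_filter.1 hr
    obtain rfl := hA.injOn_fst hr hq hrq
    rw [crossOrd_of_pos hr2] at hpq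
    exact hpq.2.2.le
  · rintro ⟨⟨⟨q, hq, rfl⟩, hqp, hopen⟩, hpq⟩
    refine ⟨q, ⟨hq, ?_⟩, rfl⟩
    rw [hA.crossRel_iff hpA hq, crossOrd_of_pos hp2]
    refine ⟨hpq, hqp, ?_⟩
    rcases lt_or_gt_of_ne (hA.bounds hq).2.2.1 with hq2 | hq2
    · rw [crossOrd_of_neg hq2]; have := hA.bounds hpA; omega
    · rw [crossOrd_of_pos hq2]
      refine (hopen q (mem_filter.2 ⟨hq, hq2⟩) rfl).lt_of_ne fun h => ?_
      obtain rfl := hA.injOn_snd hpA hq h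
      exact lt_irrefl _ hpq

lemma image_fst_filter_nestRel (hq : q ∈ posPart A) :
    (A.filter (NestRel n · q)).image Prod.fst =
      (openAt (ArcMatching.openers A) (posPart A) q.2).filter (· < q.1) := by
  obtain ⟨hqA, hq2⟩ := mem_filter.1 hq
  have hq12 := hA.fst_lt_snd_of_pos hqA hq2
  ext o
  simp only [mem_image, mem_filter, openAt, ArcMatching.openers]
  constructor
  · rintro ⟨p, ⟨hp, hpq1, hpq2⟩, rfl⟩
    rw [nestOrd_of_pos (hA.fst_pos p hp), nestOrd_of_pos (hA.fst_pos q hqA)] at hpq1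
    rw [nestOrd_of_pos hq2] at hpq2
    refine ⟨⟨⟨p, hp, rfl⟩, by omega, fun r hr hrp => ?_⟩, hpq1⟩
    obtain ⟨hr, hr2⟩ := mem_filter.1 hr
    obtain rfl := hA.injOn_fst hr hp hrp
    rw [nestOrd_of_pos hr2] at hpq2
    exact hpq2.le
  · rintro ⟨⟨⟨p, hp, rfl⟩, hpq, hopen⟩, hpq1⟩
    refine ⟨p, ⟨hp, ?_, ?_⟩, rfl⟩
    · show nestOrd n p.1 < nestOrd n q.1
      rwa [nestOrd_of_pos (hA.fst_pos p hp), nestOrd_of_pos (hA.fst_pos q hqA)]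
    show nestOrd n q.2 < nestOrd n p.2
    rw [nestOrd_of_pos hq2]
    rcases lt_or_gt_of_ne (hA.bounds hp).2.2.1 with hp2 | hp2
    · rw [nestOrd_of_neg hp2]; have := hA.bounds hqA; have := hA.bounds hp; omega
    · rw [nestOrd_of_pos hp2]
      refine (hopen p (mem_filter.2 ⟨hp, hp2⟩) rfl).lt_of_ne fun h => ?_
      obtain rfl := hA.injOn_snd hqA hp h
      exact lt_irrefl _ hpq1

lemma filter_crossRel_of_mem_negPart (hp : p ∈ negPart A) :
    A.filter (CrossRel n p) = (negPart A).filter (CrossRel n p) := by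
  obtain ⟨hpA, hp2⟩ := mem_filter.1 hp
  ext q
  simp only [negPart, mem_filter]
  exact ⟨fun ⟨hq, h⟩ => ⟨⟨hq, hA.snd_neg_of_crossRel hpA hq h hp2⟩, h⟩,
    fun h => ⟨h.1.1, h.2⟩⟩

lemma filter_nestRel_of_mem_negPart (hq : q ∈ negPart A) :
    A.filter (NestRel n · q) = (negPart A).filter (NestRel n · q) := by
  obtain ⟨hqA, hq2⟩ := mem_filter.1 hq
  ext p
  simp only [negPart, mem_filter]
  exact ⟨fun ⟨hp, h⟩ => ⟨⟨hp, hA.snd_neg_of_nestRel hp hqA h hq2⟩, h⟩,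
    fun h => ⟨h.1.1, h.2⟩⟩

lemma card_crossPairs :
    #((A ×ˢ A).filter fun z => CrossRel n z.1 z.2) =
      #((negPart A ×ˢ negPart A).filter fun z => CrossRel n z.1 z.2) +
        crossStat (ArcMatching.openers A) (posPart A) := by
  rw [card_filter_product_eq_sum_left, card_filter_product_eq_sum_left,
    ← sum_filter_not_add_sum_filter A (fun p => 0 < p.2), hA.filter_not_pos_eq_negPart]
  congr 1
  · exact sum_congr rfl fun p hp => by rw [hA.filter_crossRel_of_mem_negPart hp]
  · refine sum_congr rfl fun p hp => ?_
    rw [← hA.image_fst_filter_crossRel hp,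
      card_image_of_injOn (hA.injOn_fst.mono (coe_subset.2 (filter_subset _ _)))]

lemma card_nestPairs :
    #((A ×ˢ A).filter fun z => NestRel n z.1 z.2) =
      #((negPart A ×ˢ negPart A).filter fun z => NestRel n z.1 z.2) +
        nestStat (ArcMatching.openers A) (posPart A) := by
  rw [card_filter_product_eq_sum_right, card_filter_product_eq_sum_right,
    ← sum_filter_not_add_sum_filter A (fun p => 0 < p.2), hA.filter_not_pos_eq_negPart]
  congr 1
  · exact sum_congr rfl fun q hq => by rw [hA.filter_nestRel_of_mem_negPart hq]
  · refine sum_congr rfl fun q hq => ?_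
    rw [← hA.image_fst_filter_nestRel hq,
      card_image_of_injOn (hA.injOn_fst.mono (coe_subset.2 (filter_subset _ _)))]

lemma filter_crossRel_negPart_eq :
    (negPart A ×ˢ negPart A).filter (fun z => CrossRel n z.1 z.2) =
      (negPart A ×ˢ negPart A).filter (fun z => NestRel n z.1 z.2) := by
  refine filter_congr fun z hz => ?_
  simp only [negPart, mem_product, mem_filter] at hz
  obtain ⟨⟨h₁, h₁'⟩, h₂, h₂'⟩ := hz
  rw [hA.crossRel_iff_of_snd_neg h₁ h₂ h₁' h₂',
    hA.nestRel_iff_of_snd_neg h₁ h₂ h₁' h₂']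

end IsPosArcSet

/-! ### The involution -/

def swapPos (A : Finset (ℤ × ℤ)) : Finset (ℤ × ℤ) :=
  crossNestSwap (ArcMatching.openers A) (posPart A)

def negOpeners (A : Finset (ℤ × ℤ)) : Finset ℤ :=
  ArcMatching.openers A \ ArcMatching.openers (posPart A)

def freeOpeners (A : Finset (ℤ × ℤ)) : Finset ℤ :=
  ArcMatching.openers A \ ArcMatching.openers (swapPos A)

def relabelNeg (A : Finset (ℤ × ℤ)) (p : ℤ × ℤ) : ℤ × ℤ :=
  (rankTransport (negOpeners A) (freeOpeners A) p.1,
    -rankTransport (negOpeners A) (freeOpeners A) (-p.2))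

def swapArcs (A : Finset (ℤ × ℤ)) : Finset (ℤ × ℤ) :=
  swapPos A ∪ (negPart A).image (relabelNeg A)

lemma mem_swapArcs :
    p ∈ swapArcs A ↔ p ∈ swapPos A ∨ ∃ q ∈ negPart A, relabelNeg A q = p := by
  rw [swapArcs, mem_union, mem_image]

lemma relabelNeg_mirror (A : Finset (ℤ × ℤ)) (p : ℤ × ℤ) :
    relabelNeg A (-p.2, -p.1) = (-(relabelNeg A p).2, -(relabelNeg A p).1) := by
  simp [relabelNeg]

namespace IsPosArcSet

variable (hA : IsPosArcSet n A)
include hA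

lemma openers_bounds (hx : x ∈ ArcMatching.openers A) : 0 < x ∧ x ≤ n := by
  obtain ⟨p, hp, rfl⟩ := mem_image.1 hx
  exact ⟨hA.fst_pos p hp, hA.fst_le p hp⟩

lemma isMatchingOn_posPart : IsMatchingOn (ArcMatching.openers A) (posPart A) where
  fst_mem _ hp := mem_image_of_mem _ (mem_filter.1 hp).1
  fst_lt_snd _ hp := hA.fst_lt_snd_of_pos (mem_filter.1 hp).1 (mem_filter.1 hp).2
  injOn_fst := hA.injOn_fst.mono (coe_subset.2 (filter_subset _ _))
  injOn_snd := hA.injOn_snd.mono (coe_subset.2 (filter_subset _ _))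

lemma isMatchingOn_swapPos : IsMatchingOn (ArcMatching.openers A) (swapPos A) :=
  hA.isMatchingOn_posPart.crossNestSwap

lemma swapPos_bounds (hp : p ∈ swapPos A) : 0 < p.1 ∧ p.1 < p.2 ∧ p.2 ≤ n := by
  have hc : p.2 ∈ ArcMatching.closers (posPart A) := by
    rw [← ArcMatching.closers_crossNestSwap hA.isMatchingOn_posPart]
    exact mem_image_of_mem _ hp
  obtain ⟨q, hq, hqp⟩ := mem_image.1 hc
  have := hA.openers_bounds (hA.isMatchingOn_swapPos.fst_mem p hp)
  have := hA.isMatchingOn_swapPos.fst_lt_snd p hp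
  have := (hA.bounds (mem_filter.1 hq).1).2.2.2.2
  omega

lemma fst_mem_negOpeners (hp : p ∈ negPart A) : p.1 ∈ negOpeners A := by
  obtain ⟨hpA, hp2⟩ := mem_filter.1 hp
  refine mem_sdiff.2 ⟨mem_image_of_mem _ hpA, fun h => ?_⟩
  obtain ⟨q, hq, hqp⟩ := mem_image.1 h
  obtain rfl := hA.injOn_fst (mem_filter.1 hq).1 hpA hqp
  exact (mem_filter.1 hq).2.not_gt hp2

lemma mirror_mem_negPart (hp : p ∈ negPart A) : (-p.2, -p.1) ∈ negPart A := by
  obtain ⟨hpA, hp2⟩ := mem_filter.1 hp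
  exact mem_filter.2 ⟨hA.mirror_mem p hpA hp2, neg_neg_iff_pos.2 (hA.fst_pos p hpA)⟩

lemma neg_snd_mem_negOpeners (hp : p ∈ negPart A) : -p.2 ∈ negOpeners A :=
  hA.fst_mem_negOpeners (hA.mirror_mem_negPart hp)

lemma exists_negPart_of_mem_negOpeners (hx : x ∈ negOpeners A) :
    ∃ p ∈ negPart A, p.1 = x := by
  obtain ⟨hxA, hxpos⟩ := mem_sdiff.1 hx
  obtain ⟨p, hp, rfl⟩ := mem_image.1 hxA
  refine ⟨p, mem_filter.2 ⟨hp, ?_⟩, rfl⟩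
  have := (hA.bounds hp).2.2.1
  by_contra h
  exact hxpos (mem_image_of_mem _ (mem_filter.2 ⟨hp, by omega⟩))

lemma card_negOpeners : #(negOpeners A) = #(freeOpeners A) := by
  rw [negOpeners, freeOpeners, card_sdiff_of_subset hA.isMatchingOn_posPart.openers_subset,
    card_sdiff_of_subset hA.isMatchingOn_swapPos.openers_subset,
    hA.isMatchingOn_posPart.card_openers, hA.isMatchingOn_swapPos.card_openers, swapPos,
    ArcMatching.card_crossNestSwap hA.isMatchingOn_posPart]

lemma freeOpeners_bounds (hx : x ∈ freeOpeners A) : 0 < x ∧ x ≤ n :=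
  hA.openers_bounds (mem_sdiff.1 hx).1

lemma relabelNeg_fst_mem (hp : p ∈ negPart A) : (relabelNeg A p).1 ∈ freeOpeners A :=
  rankTransport_mem hA.card_negOpeners (hA.fst_mem_negOpeners hp)

lemma neg_relabelNeg_snd_mem (hp : p ∈ negPart A) : -(relabelNeg A p).2 ∈ freeOpeners A := by
  rw [relabelNeg, neg_neg]
  exact rankTransport_mem hA.card_negOpeners (hA.neg_snd_mem_negOpeners hp)

lemma relabelNeg_snd_neg (hp : p ∈ negPart A) : (relabelNeg A p).2 < 0 := by
  have := hA.freeOpeners_bounds (hA.neg_relabelNeg_snd_mem hp); omega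

lemma posPart_swapArcs : posPart (swapArcs A) = swapPos A := by
  ext p
  rw [posPart, mem_filter, mem_swapArcs]
  refine ⟨fun ⟨h, hp⟩ => h.resolve_right ?_, fun h => ⟨Or.inl h, by
    have := hA.swapPos_bounds h; omega⟩⟩
  rintro ⟨q, hq, rfl⟩
  exact (hA.relabelNeg_snd_neg hq).not_gt hp

lemma negPart_swapArcs :
    negPart (swapArcs A) = (negPart A).image (relabelNeg A) := by
  ext p
  rw [negPart, mem_filter, mem_swapArcs, mem_image]
  refine ⟨fun ⟨h, hp⟩ => h.resolve_left fun h => ?_, fun h => ⟨Or.inr h, ?_⟩⟩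
  · have := hA.swapPos_bounds h; omega
  · obtain ⟨q, hq, rfl⟩ := h
    exact hA.relabelNeg_snd_neg hq

lemma openers_swapArcs :
    ArcMatching.openers (swapArcs A) = ArcMatching.openers A := by
  have hc := hA.card_negOpeners
  refine Subset.antisymm (fun x hx => ?_) (fun x hx => ?_)
  · obtain ⟨p, hp, rfl⟩ := mem_image.1 hx
    rcases mem_swapArcs.1 hp with hp | ⟨q, hq, rfl⟩
    · exact hA.isMatchingOn_swapPos.fst_mem p hp
    · exact (mem_sdiff.1 (hA.relabelNeg_fst_mem hq)).1
  · by_cases hx' : x ∈ ArcMatching.openers (swapPos A)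
    · obtain ⟨p, hp, rfl⟩ := mem_image.1 hx'
      exact mem_image_of_mem _ (mem_union_left _ hp)
    · have hxf : x ∈ freeOpeners A := mem_sdiff.2 ⟨hx, hx'⟩
      obtain ⟨p, hp, hpx⟩ :=
        hA.exists_negPart_of_mem_negOpeners (rankTransport_mem hc.symm hxf)
      refine mem_image.2 ⟨relabelNeg A p, mem_union_right _ (mem_image_of_mem _ hp), ?_⟩
      rw [relabelNeg, hpx, rankTransport_rankTransport hc.symm hxf]

lemma injOn_fst_relabelNeg :
    Set.InjOn (Prod.fst ∘ relabelNeg A) (negPart A : Set (ℤ × ℤ)) :=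
  fun _ hp _ hq h => hA.injOn_fst (mem_filter.1 hp).1 (mem_filter.1 hq).1 <|
    (rankTransport_strictMonoOn hA.card_negOpeners).injOn (hA.fst_mem_negOpeners hp)
      (hA.fst_mem_negOpeners hq) h

lemma injOn_snd_relabelNeg :
    Set.InjOn (Prod.snd ∘ relabelNeg A) (negPart A : Set (ℤ × ℤ)) :=
  fun _ hp _ hq h => hA.injOn_snd (mem_filter.1 hp).1 (mem_filter.1 hq).1 <| neg_injective <|
    (rankTransport_strictMonoOn hA.card_negOpeners).injOn (hA.neg_snd_mem_negOpeners hp)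
      (hA.neg_snd_mem_negOpeners hq) (neg_injective h)

lemma relabelNeg_snd_eq_neg_fst_iff (hp : p ∈ negPart A) :
    (relabelNeg A p).2 = -(relabelNeg A p).1 ↔ p.2 = -p.1 := by
  rw [relabelNeg, neg_inj, ((rankTransport_strictMonoOn hA.card_negOpeners).injOn).eq_iff
    (hA.neg_snd_mem_negOpeners hp) (hA.fst_mem_negOpeners hp), neg_eq_iff_eq_neg]

lemma disjoint_swapPos_image_relabelNeg :
    Disjoint (swapPos A : Set (ℤ × ℤ)) ((negPart A).image (relabelNeg A)) := by
  refine Set.disjoint_left.2 fun p hp hp' => ?_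
  obtain ⟨q, hq, rfl⟩ := mem_image.1 hp'
  have := hA.swapPos_bounds hp
  have := hA.relabelNeg_snd_neg hq
  omega

lemma injOn_fst_swapArcs : Set.InjOn Prod.fst (swapArcs A : Set (ℤ × ℤ)) := by
  rw [swapArcs, coe_union, Set.injOn_union hA.disjoint_swapPos_image_relabelNeg, coe_image]
  refine ⟨hA.isMatchingOn_swapPos.injOn_fst, hA.injOn_fst_relabelNeg.image_of_comp,
    fun p hp _ ⟨q, hq, hqp⟩ h => ?_⟩
  subst hqp
  exact (mem_sdiff.1 (hA.relabelNeg_fst_mem hq)).2 (h ▸ mem_image_of_mem Prod.fst hp)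

lemma injOn_snd_swapArcs : Set.InjOn Prod.snd (swapArcs A : Set (ℤ × ℤ)) := by
  rw [swapArcs, coe_union, Set.injOn_union hA.disjoint_swapPos_image_relabelNeg, coe_image]
  refine ⟨hA.isMatchingOn_swapPos.injOn_snd, hA.injOn_snd_relabelNeg.image_of_comp,
    fun p hp _ ⟨q, hq, hqp⟩ h => ?_⟩
  subst hqp
  have := hA.swapPos_bounds hp
  have := hA.relabelNeg_snd_neg hq
  omega

lemma exists_zeroArc_of_mem_swapArcs (hp : p ∈ swapArcs A) (hp' : p.2 = -p.1) :
    ∃ r ∈ negPart A, r.2 = -r.1 ∧ relabelNeg A r = p := by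
  rcases mem_swapArcs.1 hp with hp | ⟨r, hr, rfl⟩
  · have := hA.swapPos_bounds hp; omega
  · exact ⟨r, hr, (hA.relabelNeg_snd_eq_neg_fst_iff hr).1 hp', rfl⟩

lemma isPosArcSet_swapArcs : IsPosArcSet n (swapArcs A) := by
  have hfst : ∀ p ∈ swapArcs A, 0 < p.1 ∧ p.1 ≤ n := fun p hp =>
    hA.openers_bounds (hA.openers_swapArcs ▸ mem_image_of_mem Prod.fst hp)
  refine ⟨fun p hp => (hfst p hp).1, fun p hp => (hfst p hp).2, fun p hp => ?_, fun p hp => ?_,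
    hA.injOn_fst_swapArcs, hA.injOn_snd_swapArcs, fun p hp hp2 => ?_, fun p hp q hq hp' hq' => ?_⟩
  · rcases mem_swapArcs.1 hp with hp | ⟨q, hq, rfl⟩
    · have := hA.swapPos_bounds hp; rw [mem_pmn]; omega
    · have := hA.freeOpeners_bounds (hA.neg_relabelNeg_snd_mem hq); rw [mem_pmn]; omega
  · have := hfst p hp
    rcases mem_swapArcs.1 hp with hp | ⟨q, hq, rfl⟩
    · have := hA.swapPos_bounds hp
      rw [nestOrd_of_pos (by omega), nestOrd_of_pos (by omega)]; omega
    · have := hA.freeOpeners_bounds (hA.neg_relabelNeg_snd_mem hq)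
      rw [nestOrd_of_pos (by omega), nestOrd_of_neg (hA.relabelNeg_snd_neg hq)]; omega
  · rcases mem_swapArcs.1 hp with hp | ⟨q, hq, rfl⟩
    · have := hA.swapPos_bounds hp; omega
    · rw [← relabelNeg_mirror]
      exact mem_union_right _ (mem_image_of_mem _ (hA.mirror_mem_negPart hq))
  · obtain ⟨r, hr, hr', rfl⟩ := hA.exists_zeroArc_of_mem_swapArcs hp hp'
    obtain ⟨s, hs, hs', rfl⟩ := hA.exists_zeroArc_of_mem_swapArcs hq hq'
    rw [hA.zeroArc_unique r (mem_filter.1 hr).1 s (mem_filter.1 hs).1 hr' hs']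

lemma swapPos_swapArcs : swapPos (swapArcs A) = posPart A := by
  rw [swapPos, hA.openers_swapArcs, hA.posPart_swapArcs, swapPos,
    ArcMatching.crossNestSwap_crossNestSwap hA.isMatchingOn_posPart]

lemma negOpeners_swapArcs : negOpeners (swapArcs A) = freeOpeners A := by
  rw [negOpeners, hA.openers_swapArcs, hA.posPart_swapArcs, freeOpeners]

lemma freeOpeners_swapArcs : freeOpeners (swapArcs A) = negOpeners A := by
  rw [freeOpeners, hA.openers_swapArcs, hA.swapPos_swapArcs, negOpeners]

lemma relabelNeg_swapArcs_relabelNeg (hp : p ∈ negPart A) :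
    relabelNeg (swapArcs A) (relabelNeg A p) = p := by
  have hc := hA.card_negOpeners
  rw [relabelNeg, hA.negOpeners_swapArcs, hA.freeOpeners_swapArcs, relabelNeg]
  dsimp only
  rw [rankTransport_rankTransport hc (hA.fst_mem_negOpeners hp), neg_neg,
    rankTransport_rankTransport hc (hA.neg_snd_mem_negOpeners hp), neg_neg]

theorem swapArcs_swapArcs : swapArcs (swapArcs A) = A := by
  rw [swapArcs, hA.swapPos_swapArcs, hA.negPart_swapArcs, image_image,
    image_congr (f := relabelNeg (swapArcs A) ∘ relabelNeg A) (g := id)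
      fun p hp => hA.relabelNeg_swapArcs_relabelNeg hp, image_id,
    ← hA.filter_not_pos_eq_negPart, posPart, filter_union_filter_not_eq]

lemma crossRel_relabelNeg_iff (hp : p ∈ negPart A) (hq : q ∈ negPart A) :
    CrossRel n (relabelNeg A p) (relabelNeg A q) ↔ CrossRel n p q := by
  have hmem : ∀ {p}, p ∈ negPart A → relabelNeg A p ∈ negPart (swapArcs A) := fun hp =>
    hA.negPart_swapArcs ▸ mem_image_of_mem _ hp
  obtain ⟨hp', hp2'⟩ := mem_filter.1 (hmem hp)
  obtain ⟨hq', hq2'⟩ := mem_filter.1 (hmem hq)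
  obtain ⟨hpA, hp2⟩ := mem_filter.1 hp
  obtain ⟨hqA, hq2⟩ := mem_filter.1 hq
  have hmono := rankTransport_strictMonoOn hA.card_negOpeners
  rw [hA.isPosArcSet_swapArcs.crossRel_iff_of_snd_neg hp' hq' hp2' hq2',
    hA.crossRel_iff_of_snd_neg hpA hqA hp2 hq2, relabelNeg, relabelNeg, neg_lt_neg_iff,
    hmono.lt_iff_lt (hA.fst_mem_negOpeners hp) (hA.fst_mem_negOpeners hq),
    hmono.lt_iff_lt (hA.neg_snd_mem_negOpeners hp) (hA.neg_snd_mem_negOpeners hq), neg_lt_neg_iff]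

lemma card_negPart_crossPairs_swapArcs :
    #((negPart (swapArcs A) ×ˢ negPart (swapArcs A)).filter fun z => CrossRel n z.1 z.2) =
      #((negPart A ×ˢ negPart A).filter fun z => CrossRel n z.1 z.2) := by
  rw [hA.negPart_swapArcs]
  exact card_filter_product_image hA.injOn_fst_relabelNeg.of_comp
    fun p hp q hq => hA.crossRel_relabelNeg_iff hp hq

theorem card_crossPairs_swapArcs :
    #((swapArcs A ×ˢ swapArcs A).filter fun z => CrossRel n z.1 z.2) =
      #((A ×ˢ A).filter fun z => NestRel n z.1 z.2) := by
  rw [hA.isPosArcSet_swapArcs.card_crossPairs, hA.card_nestPairs,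
    hA.card_negPart_crossPairs_swapArcs, hA.filter_crossRel_negPart_eq,
    hA.openers_swapArcs, hA.posPart_swapArcs, swapPos,
    ArcMatching.crossStat_crossNestSwap hA.isMatchingOn_posPart]

theorem card_nestPairs_swapArcs :
    #((swapArcs A ×ˢ swapArcs A).filter fun z => NestRel n z.1 z.2) =
      #((A ×ˢ A).filter fun z => CrossRel n z.1 z.2) := by
  have hA' := hA.isPosArcSet_swapArcs
  rw [hA'.card_nestPairs, hA.card_crossPairs, ← hA'.filter_crossRel_negPart_eq,
    hA.card_negPart_crossPairs_swapArcs, hA.openers_swapArcs,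
    hA.posPart_swapArcs, swapPos, ArcMatching.nestStat_crossNestSwap hA.isMatchingOn_posPart]

end IsPosArcSet

variable (P)

def crossNestInvolution : SetPartitionC n :=
  ofPosArcs (swapArcs (posArcs P)) (posArcs_isPosArcSet P).isPosArcSet_swapArcs

lemma posArcs_crossNestInvolution : posArcs P.crossNestInvolution = swapArcs (posArcs P) :=
  posArcs_ofPosArcs _

lemma crossNestInvolution_involutive : Function.Involutive (crossNestInvolution (n := n)) :=
  fun P => posArcs_injective <| by
    rw [posArcs_crossNestInvolution, posArcs_crossNestInvolution,
      (posArcs_isPosArcSet P).swapArcs_swapArcs]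

lemma openers_crossNestInvolution : P.crossNestInvolution.openers = P.openers := by
  rw [openers_eq_openers_posArcs, openers_eq_openers_posArcs, posArcs_crossNestInvolution,
    (posArcs_isPosArcSet P).openers_swapArcs]

lemma closers_crossNestInvolution : P.crossNestInvolution.closers = P.closers := by
  have hA := posArcs_isPosArcSet P
  rw [closers_eq_closers_posArcs, closers_eq_closers_posArcs, posArcs_crossNestInvolution,
    hA.posPart_swapArcs, swapPos, ArcMatching.closers_crossNestSwap hA.isMatchingOn_posPart]

lemma crossingsPos_crossNestInvolution : P.crossNestInvolution.crossingsPos = P.nestingsPos := by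
  rw [crossingsPos, nestingsPos, ← posArcs, ← posArcs, posArcs_crossNestInvolution,
    (posArcs_isPosArcSet P).card_crossPairs_swapArcs]

lemma nestingsPos_crossNestInvolution : P.crossNestInvolution.nestingsPos = P.crossingsPos := by
  rw [crossingsPos, nestingsPos, ← posArcs, ← posArcs, posArcs_crossNestInvolution,
    (posArcs_isPosArcSet P).card_nestPairs_swapArcs]

end SetPartitionC

theorem stmt5_general (n : ℕ) :
    ∃ Φ : SetPartitionC n → SetPartitionC n, Function.Bijective Φ ∧
      ∀ P : SetPartitionC n,
        (Φ P).openers = P.openers ∧ (Φ P).closers = P.closers ∧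
        (Φ P).crossingsPos = P.nestingsPos ∧ (Φ P).nestingsPos = P.crossingsPos :=
  ⟨SetPartitionC.crossNestInvolution, SetPartitionC.crossNestInvolution_involutive.bijective,
    fun P => ⟨P.openers_crossNestInvolution, P.closers_crossNestInvolution,
      P.crossingsPos_crossNestInvolution, P.nestingsPos_crossNestInvolution⟩⟩

theorem stmt5 (n : ℕ) (hn : 0 < n) :
    ∃ Φ : SetPartitionC n → SetPartitionC n, Function.Bijective Φ ∧
      ∀ P : SetPartitionC n,
        (Φ P).openers = P.openers ∧ (Φ P).closers = P.closers ∧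
        (Φ P).crossingsPos = P.nestingsPos ∧ (Φ P).nestingsPos = P.crossingsPos :=
  stmt5_general n
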